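/- arXiv:1808.06449 — 6 statements merged into one kernel-verified Lean document; each statement's English description precedes it below -/
import Mathlib

section
/- Let ε ∈ [0,1), let c be a positive integer, let ℋ be a finite set, and let (C,H) be jointly distributed over [c+1]×ℋ with supp(C) = [c]. Write H_i := (H | C = i). For each i ∈ [c] let 𝒜_i ⊆ ℋ be a subset with Pr_{H_i}[𝒜_i] ≥ 1−ε. Define the random variable C' jointly with (C,H) as follows: given a sample h of H, C' is the smallest index i ∈ [c] such that h ∈ 𝒜_i, and C' = c+1 if no such index exists. Then ½‖p_{HC} − p_{HC'}‖₁ ≤ Σ_{i∈[c]} p_C(i) · Σ_{j∈[c], j≠i} Pr_{H_i}[𝒜_j] + ε. -/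
/-! Since `C'` is a function of `H`, for each `h` the two distributions `p_{HC}(h, ·)` and
`p_{HC'}(h, ·) = p_H(h) δ_{C'(h)}` have the same mass, so their ℓ1 distance is twice the mass of
`p_{HC}(h, ·)` off `C'(h)`; hence `½‖p_{HC} − p_{HC'}‖₁ = Pr[C' ≠ C]`. Given `C = i ∈ [c]`,
decoding fails only if `H ∉ 𝒜_i`, which has probability at most `ε`, or `H ∈ 𝒜_j` for some
`j ∈ [c]` other than `i`. A union bound over these events, averaged over `i`, gives the claim. -/

open Finset Real
open scoped Classical

noncomputable section

variable {ℋ : Type*} [Fintype ℋ]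

/-- Marginal of `C` for a joint distribution on `[c+1] × ℋ`. -/
def margC {c : ℕ} (p : Fin (c + 1) → ℋ → ℝ) (i : Fin (c + 1)) : ℝ := ∑ h, p i h

/-- Marginal of `H`. -/
def margH {c : ℕ} (p : Fin (c + 1) → ℋ → ℝ) (h : ℋ) : ℝ := ∑ i, p i h

/-- `Pr_{H_i}[𝒜] = Σ_{h ∈ 𝒜} p_{H|C=i}(h)`. -/
def prHi {c : ℕ} (p : Fin (c + 1) → ℋ → ℝ) (i : Fin (c + 1)) (𝒜 : Finset ℋ) : ℝ :=
  (∑ h ∈ 𝒜, p i h) / margC p i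

section UnionBound

variable {α ι : Type*} [DecidableEq α] {f : α → ℝ}

theorem Finset.sum_union_le_of_nonneg (hf : ∀ a, 0 ≤ f a) (s t : Finset α) :
    ∑ a ∈ s ∪ t, f a ≤ ∑ a ∈ s, f a + ∑ a ∈ t, f a := by
  rw [← sum_union_inter]
  exact le_add_of_nonneg_right (sum_nonneg fun a _ => hf a)

theorem Finset.sum_biUnion_le_of_nonneg [DecidableEq ι] (hf : ∀ a, 0 ≤ f a) (J : Finset ι)
    (B : ι → Finset α) : ∑ a ∈ J.biUnion B, f a ≤ ∑ j ∈ J, ∑ a ∈ B j, f a := by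
  induction J using Finset.induction_on with
  | empty => simp
  | insert j J hj ih =>
    rw [biUnion_insert, sum_insert hj]
    exact (sum_union_le_of_nonneg hf _ _).trans (add_le_add_right ih _)

end UnionBound

theorem sum_abs_sum_mul_ite_sub {ι : Type*} [Fintype ι] [DecidableEq ι] {q : ι → ℝ}
    (hq : ∀ i, 0 ≤ q i) (k : ι) :
    ∑ i, |(∑ j, q j) * (if k = i then 1 else 0) - q i| = 2 * ∑ i with i ≠ k, q i := by
  have hk : q k ≤ ∑ j, q j := single_le_sum (fun i _ => hq i) (mem_univ k)
  have hoff : ∑ i with i ≠ k, q i = ∑ j, q j - q k := by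
    rw [← sum_erase_add univ q (mem_univ k), filter_ne' univ k]
    ring
  have hterm : ∀ i ∈ univ.erase k, |(∑ j, q j) * (if k = i then 1 else 0) - q i| = q i :=
    fun i hi => by rw [if_neg (ne_of_mem_erase hi).symm, mul_zero, zero_sub, abs_neg,
      abs_of_nonneg (hq i)]
  rw [← sum_erase_add univ _ (mem_univ k), sum_congr rfl hterm, ← filter_ne' univ k, hoff,
    if_pos rfl, mul_one, abs_of_nonneg (sub_nonneg.2 hk)]
  ring

theorem filter_ne_subset_compl_union_biUnion {ι : Type*} [DecidableEq ι] {K : Finset ι}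
    {𝒜 : ι → Finset ℋ} {dec : ℋ → ι}
    (hdec : ∀ h, (dec h ∈ K ∧ h ∈ 𝒜 (dec h)) ∨ ∀ j ∈ K, h ∉ 𝒜 j) {i : ι} (hi : i ∈ K) :
    ({h | dec h ≠ i} : Finset ℋ) ⊆ (𝒜 i)ᶜ ∪ (K.erase i).biUnion 𝒜 := by
  intro h hh
  rw [mem_filter] at hh
  by_cases hA : h ∈ 𝒜 i
  · rcases hdec h with ⟨hK, hmem⟩ | hnone
    · exact mem_union_right _ (mem_biUnion.2 ⟨dec h, mem_erase.2 ⟨hh.2, hK⟩, hmem⟩)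
    · exact absurd hA (hnone i hi)
  · exact mem_union_left _ (mem_compl.2 hA)

section Distribution

variable {c : ℕ} {p : Fin (c + 1) → ℋ → ℝ} {i : Fin (c + 1)}

theorem margC_mul_prHi (hi : margC p i ≠ 0) (A : Finset ℋ) :
    margC p i * prHi p i A = ∑ h ∈ A, p i h :=
  mul_div_cancel₀ _ hi

theorem eq_zero_of_margC_eq_zero (hp0 : ∀ h, 0 ≤ p i h) (hi : margC p i = 0) (h : ℋ) :
    p i h = 0 :=
  (sum_eq_zero_iff_of_nonneg fun h _ => hp0 h).1 hi h (mem_univ h)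

theorem sum_compl_le_margC_mul {ε : ℝ} {A : Finset ℋ} (hi : 0 < margC p i)
    (hA : 1 - ε ≤ prHi p i A) : ∑ h ∈ Aᶜ, p i h ≤ margC p i * ε := by
  have hsplit : ∑ h ∈ Aᶜ, p i h + ∑ h ∈ A, p i h = margC p i := sum_compl_add_sum A (p i)
  have hmass : margC p i * (1 - ε) ≤ ∑ h ∈ A, p i h := by
    rw [← margC_mul_prHi hi.ne']
    exact mul_le_mul_of_nonneg_left hA hi.le
  linarith

theorem sum_le_margC_mul_sum_prHi_add {ε : ℝ} {𝒜 : Fin (c + 1) → Finset ℋ}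
    {S : Finset ℋ} {J : Finset (Fin (c + 1))} (hp0 : ∀ h, 0 ≤ p i h) (hi : 0 < margC p i)
    (h𝒜 : 1 - ε ≤ prHi p i (𝒜 i)) (hS : S ⊆ (𝒜 i)ᶜ ∪ J.biUnion 𝒜) :
    ∑ h ∈ S, p i h ≤ margC p i * ∑ j ∈ J, prHi p i (𝒜 j) + margC p i * ε :=
  calc ∑ h ∈ S, p i h
      ≤ ∑ h ∈ (𝒜 i)ᶜ ∪ J.biUnion 𝒜, p i h :=
        sum_le_sum_of_subset_of_nonneg hS fun h _ _ => hp0 h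
    _ ≤ ∑ h ∈ (𝒜 i)ᶜ, p i h + ∑ h ∈ J.biUnion 𝒜, p i h := sum_union_le_of_nonneg hp0 _ _
    _ ≤ margC p i * ε + ∑ j ∈ J, ∑ h ∈ 𝒜 j, p i h :=
        add_le_add (sum_compl_le_margC_mul hi h𝒜) (sum_biUnion_le_of_nonneg hp0 J 𝒜)
    _ = margC p i * ∑ j ∈ J, prHi p i (𝒜 j) + margC p i * ε := by
        rw [mul_sum, sum_congr rfl fun j _ => margC_mul_prHi hi.ne' (𝒜 j)]
        ring

theorem half_sum_abs_eq_sum_filter_ne (hp0 : ∀ i h, 0 ≤ p i h) (C' : ℋ → Fin (c + 1)) :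
    (1 / 2) * (∑ i, ∑ h, |margH p h * (if C' h = i then 1 else 0) - p i h|) =
      ∑ i, ∑ h with C' h ≠ i, p i h := by
  unfold margH
  rw [sum_comm, sum_congr rfl fun h _ => sum_abs_sum_mul_ite_sub (hp0 · h) (C' h), ← mul_sum,
    ← mul_assoc, one_div_mul_cancel two_ne_zero, one_mul]
  exact sum_comm' fun h i => by simp [eq_comm]

end Distribution

theorem position_based_decoding_error_general
    {c : ℕ} (p : Fin (c + 1) → ℋ → ℝ)
    (hp0 : ∀ i h, 0 ≤ p i h) (hp1 : (∑ i, ∑ h, p i h) = 1)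
    (hsupp : ∀ i : Fin (c + 1), 0 < margC p i ↔ (i : ℕ) < c)
    (ε : ℝ)
    (𝒜 : Fin (c + 1) → Finset ℋ)
    (h𝒜 : ∀ i : Fin (c + 1), (i : ℕ) < c → 1 - ε ≤ prHi p i (𝒜 i))
    (C' : ℋ → Fin (c + 1))
    (hC' : ∀ h : ℋ,
      (((C' h : ℕ) < c ∧ h ∈ 𝒜 (C' h) ∧ ∀ j : Fin (c + 1), j < C' h → h ∉ 𝒜 j) ∨
       ((C' h : ℕ) = c ∧ ∀ j : Fin (c + 1), (j : ℕ) < c → h ∉ 𝒜 j))) :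
    (1 / 2) * (∑ i, ∑ h, |margH p h * (if C' h = i then 1 else 0) - p i h|) ≤
      (∑ i : Fin (c + 1), if i.val < c then
          margC p i * (∑ j : Fin (c + 1), if j.val < c ∧ j ≠ i then prHi p i (𝒜 j) else 0)
        else 0) + ε := by
  set K : Finset (Fin (c + 1)) := {j | (j : ℕ) < c}
  have hdec : ∀ h, (C' h ∈ K ∧ h ∈ 𝒜 (C' h)) ∨ ∀ j ∈ K, h ∉ 𝒜 j := fun h =>
    (hC' h).imp (fun hh => ⟨by simpa [K] using hh.1, hh.2.1⟩)
      (fun hh j hj => hh.2 j (by simpa [K] using hj))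
  have hrow : ∀ i, ∑ h with C' h ≠ i, p i h ≤
      (if i.val < c then
          margC p i * (∑ j : Fin (c + 1), if j.val < c ∧ j ≠ i then prHi p i (𝒜 j) else 0)
        else 0) + margC p i * ε := by
    intro i
    split_ifs with hi
    · have hJ : ({j | (j : ℕ) < c ∧ j ≠ i} : Finset (Fin (c + 1))) = K.erase i := by
        ext j; simp [K, and_comm]
      rw [← sum_filter, hJ]
      exact sum_le_margC_mul_sum_prHi_add (hp0 i) ((hsupp i).2 hi) (h𝒜 i hi)
        (filter_ne_subset_compl_union_biUnion hdec (by simpa [K] using hi))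
    · have hzero : margC p i = 0 :=
        le_antisymm (not_lt.1 (mt (hsupp i).1 hi)) (sum_nonneg fun h _ => hp0 i h)
      simp [eq_zero_of_margC_eq_zero (hp0 i) hzero, hzero]
  calc (1 / 2) * (∑ i, ∑ h, |margH p h * (if C' h = i then 1 else 0) - p i h|)
      = ∑ i, ∑ h with C' h ≠ i, p i h := half_sum_abs_eq_sum_filter_ne hp0 C'
    _ ≤ _ := sum_le_sum fun i _ => hrow i
    _ = _ := by rw [sum_add_distrib, ← sum_mul, show ∑ i, margC p i = 1 from hp1, one_mul]

/-- Lemma 2.9, position-based decoding: let `(C,H)` be jointly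
distributed over `[c+1] × ℋ` (indices `i : Fin (c+1)` with `(i : ℕ) < c` representing
`[c]`, and the last index representing `c+1`), with `supp(C) = [c]`.  For each `i ∈ [c]`
let `𝒜 i ⊆ ℋ` satisfy `Pr_{H_i}[𝒜 i] ≥ 1 − ε`.  Let `C' : ℋ → Fin (c+1)` pick the
smallest `i ∈ [c]` with `h ∈ 𝒜 i`, and the last index if no such `i` exists.  Then
`½‖p_{HC} − p_{HC'}‖₁ ≤ Σ_{i∈[c]} p_C(i) Σ_{j∈[c], j≠i} Pr_{H_i}[𝒜 j] + ε`. -/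
theorem position_based_decoding_error
    {c : ℕ} (hc : 0 < c) (p : Fin (c + 1) → ℋ → ℝ)
    (hp0 : ∀ i h, 0 ≤ p i h) (hp1 : (∑ i, ∑ h, p i h) = 1)
    (hsupp : ∀ i : Fin (c + 1), 0 < margC p i ↔ (i : ℕ) < c)
    (ε : ℝ) (hε0 : 0 ≤ ε) (hε1 : ε < 1)
    (𝒜 : Fin (c + 1) → Finset ℋ)
    (h𝒜 : ∀ i : Fin (c + 1), (i : ℕ) < c → 1 - ε ≤ prHi p i (𝒜 i))
    (C' : ℋ → Fin (c + 1))
    (hC' : ∀ h : ℋ,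
      (((C' h : ℕ) < c ∧ h ∈ 𝒜 (C' h) ∧ ∀ j : Fin (c + 1), j < C' h → h ∉ 𝒜 j) ∨
       ((C' h : ℕ) = c ∧ ∀ j : Fin (c + 1), (j : ℕ) < c → h ∉ 𝒜 j))) :
    (1 / 2) * (∑ i, ∑ h, |margH p h * (if C' h = i then 1 else 0) - p i h|) ≤
      (∑ i : Fin (c + 1), if i.val < c then
          margC p i * (∑ j : Fin (c + 1), if j.val < c ∧ j ≠ i then prHi p i (𝒜 j) else 0)
        else 0) + ε :=
  position_based_decoding_error_general p hp0 hp1 hsupp ε 𝒜 h𝒜 C' hC'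

end
end

section
/- Let ε, δ ∈ (0,1) with 1/√δ an integer greater than 1, and let p_{XYZMN} over finite sets 𝒳×𝒴×𝒵×ℳ×𝒩 satisfy the Markov conditions M−X−(Y,Z,N) and N−Y−(X,Z,M). Suppose R₁, R₂ satisfy Pr_{(x,y,z,m,n)~p}[ p_{M|X=x}(m)/p_{M|NZ=n,z}(m) ≤ δ·2^{R₁} and p_{N|Y=y}(n)/p_{N|MZ=m,z}(n) ≤ δ·2^{R₂} and (p_{M|X=x}(m)·p_{N|Y=y}(n))/p_{MN|Z=z}(m,n) ≤ δ⁴·2^{R₁+R₂−log log(max(|ℳ|,|𝒩|)/δ)} ] ≥ 1−ε. Let K be a positive integer such that K·p_{M|X=x}(m) and K·p_{N|Y=y}(n) are positive integers whenever defined, and extend p to a joint distribution p_{XYZMNEF} over 𝒳×𝒴×𝒵×ℳ×𝒩×[K]×[K] by letting, conditioned on (X,Y,Z,M,N)=(x,y,z,m,n), E and F be independent with E uniform on {1,…,K·p_{M|X=x}(m)} and F uniform on {1,…,K·p_{N|Y=y}(n)}. Let S be the uniform distribution on ℳ×[K] and T the uniform distribution on 𝒩×[K]. Then there exists a set 𝒜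 ⊆ ℳ×𝒩×[K]×[K]×𝒵 such that: (i) Pr_{(m,n,e,f,z)~p_{MNEFZ}}[(m,n,e,f,z) ∈ 𝒜] ≥ 1−ε−5δ; (ii) Pr_{(m,e,z)~p_{MEZ}, (n,f)~T independent}[(m,n,e,f,z) ∈ 𝒜] ≤ δ·2^{R₂}/|𝒩|; (iii) Pr_{(m,e)~S, (n,f,z)~p_{NFZ} independent}[(m,n,e,f,z) ∈ 𝒜] ≤ δ·2^{R₁}/|ℳ|; and (iv) Pr_{(m,e)~S, (n,f)~T, z~p_Z all independent}[(m,n,e,f,z) ∈ 𝒜] ≤ δ·2^{R₁+R₂}/(|ℳ||𝒩|). -/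
open Finset Real
open scoped Classical

noncomputable section

variable {𝒳 𝒴 𝒵 ℳ 𝒩 : Type*} [Fintype 𝒳] [Fintype 𝒴] [Fintype 𝒵] [Fintype ℳ] [Fintype 𝒩]

/-- Marginal on `X`. -/
def margX (p : 𝒳 → 𝒴 → 𝒵 → ℳ → 𝒩 → ℝ) (x : 𝒳) : ℝ := ∑ y, ∑ z, ∑ m, ∑ n, p x y z m n

/-- Marginal on `Y`. -/
def margY (p : 𝒳 → 𝒴 → 𝒵 → ℳ → 𝒩 → ℝ) (y : 𝒴) : ℝ := ∑ x, ∑ z, ∑ m, ∑ n, p x y z m n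

/-- Marginal on `Z`. -/
def margZ (p : 𝒳 → 𝒴 → 𝒵 → ℳ → 𝒩 → ℝ) (z : 𝒵) : ℝ := ∑ x, ∑ y, ∑ m, ∑ n, p x y z m n

/-- Marginal on `(X, M)`. -/
def margXM (p : 𝒳 → 𝒴 → 𝒵 → ℳ → 𝒩 → ℝ) (x : 𝒳) (m : ℳ) : ℝ := ∑ y, ∑ z, ∑ n, p x y z m n

/-- Marginal on `(Y, N)`. -/
def margYN (p : 𝒳 → 𝒴 → 𝒵 → ℳ → 𝒩 → ℝ) (y : 𝒴) (n : 𝒩) : ℝ := ∑ x, ∑ z, ∑ m, p x y z m n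

/-- Marginal on `(X, Y, Z)`. -/
def margXYZ (p : 𝒳 → 𝒴 → 𝒵 → ℳ → 𝒩 → ℝ) (x : 𝒳) (y : 𝒴) (z : 𝒵) : ℝ := ∑ m, ∑ n, p x y z m n

/-- Marginal on `(M, Z)`. -/
def margMZ (p : 𝒳 → 𝒴 → 𝒵 → ℳ → 𝒩 → ℝ) (m : ℳ) (z : 𝒵) : ℝ := ∑ x, ∑ y, ∑ n, p x y z m n

/-- Marginal on `(N, Z)`. -/
def margNZ (p : 𝒳 → 𝒴 → 𝒵 → ℳ → 𝒩 → ℝ) (n : 𝒩) (z : 𝒵) : ℝ := ∑ x, ∑ y, ∑ m, p x y z m n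

/-- Marginal on `(M, N, Z)`. -/
def margMNZ (p : 𝒳 → 𝒴 → 𝒵 → ℳ → 𝒩 → ℝ) (m : ℳ) (n : 𝒩) (z : 𝒵) : ℝ := ∑ x, ∑ y, p x y z m n

/-- Conditional `p_{M|X=x}(m)`. -/
def condMX (p : 𝒳 → 𝒴 → 𝒵 → ℳ → 𝒩 → ℝ) (x : 𝒳) (m : ℳ) : ℝ := margXM p x m / margX p x

/-- Conditional `p_{N|Y=y}(n)`. -/
def condNY (p : 𝒳 → 𝒴 → 𝒵 → ℳ → 𝒩 → ℝ) (y : 𝒴) (n : 𝒩) : ℝ := margYN p y n / margY p y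

/-- Conditional `p_{M|N=n,Z=z}(m)`. -/
def condM_NZ (p : 𝒳 → 𝒴 → 𝒵 → ℳ → 𝒩 → ℝ) (m : ℳ) (n : 𝒩) (z : 𝒵) : ℝ :=
  margMNZ p m n z / margNZ p n z

/-- Conditional `p_{N|M=m,Z=z}(n)`. -/
def condN_MZ (p : 𝒳 → 𝒴 → 𝒵 → ℳ → 𝒩 → ℝ) (n : 𝒩) (m : ℳ) (z : 𝒵) : ℝ :=
  margMNZ p m n z / margMZ p m z

/-- Conditional `p_{MN|Z=z}(m,n)`. -/
def condMN_Z (p : 𝒳 → 𝒴 → 𝒵 → ℳ → 𝒩 → ℝ) (m : ℳ) (n : 𝒩) (z : 𝒵) : ℝ :=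
  margMNZ p m n z / margZ p z

/-- `p` is a probability mass function. -/
def IsDist (p : 𝒳 → 𝒴 → 𝒵 → ℳ → 𝒩 → ℝ) : Prop :=
  (∀ x y z m n, 0 ≤ p x y z m n) ∧ (∑ x, ∑ y, ∑ z, ∑ m, ∑ n, p x y z m n) = 1

/-- The Markov conditions `M − X − (Y,Z,N)` and `N − Y − (X,Z,M)`:
`p(x,y,z,m,n) = p_{XYZ}(x,y,z) · p_{M|X=x}(m) · p_{N|Y=y}(n)` whenever `p_{XYZ}(x,y,z) > 0`. -/
def MarkovCond (p : 𝒳 → 𝒴 → 𝒵 → ℳ → 𝒩 → ℝ) : Prop :=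
  ∀ x y z m n, 0 < margXYZ p x y z →
    p x y z m n = margXYZ p x y z * condMX p x m * condNY p y n

/-- The extension of the distribution `p` (satisfying the Markov conditions) by random
variables `E, F` over `[K] × [K]` (modelled as `Fin K`, a value `e : Fin K` representing
the integer `e + 1`): conditioned on `(X,Y,Z,M,N) = (x,y,z,m,n)`, `E` and `F` are
independent, `E` uniform on `{1, …, K·p_{M|X=x}(m)}`, `F` uniform on
`{1, …, K·p_{N|Y=y}(n)}`. -/
def extEF (p : 𝒳 → 𝒴 → 𝒵 → ℳ → 𝒩 → ℝ) (K : ℕ)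
    (x : 𝒳) (y : 𝒴) (z : 𝒵) (m : ℳ) (n : 𝒩) (e f : Fin K) : ℝ :=
  p x y z m n *
    (if ((e : ℕ) : ℝ) + 1 ≤ (K : ℝ) * condMX p x m then 1 / ((K : ℝ) * condMX p x m) else 0) *
    (if ((f : ℕ) : ℝ) + 1 ≤ (K : ℝ) * condNY p y n then 1 / ((K : ℝ) * condNY p y n) else 0)

/-- Marginal of the extension on `(M, N, E, F, Z)`. -/
def extMNEFZ (p : 𝒳 → 𝒴 → 𝒵 → ℳ → 𝒩 → ℝ) (K : ℕ)
    (m : ℳ) (n : 𝒩) (e f : Fin K) (z : 𝒵) : ℝ :=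
  ∑ x, ∑ y, extEF p K x y z m n e f

/-- Marginal of the extension on `(M, E, Z)`. -/
def extMEZ (p : 𝒳 → 𝒴 → 𝒵 → ℳ → 𝒩 → ℝ) (K : ℕ) (m : ℳ) (e : Fin K) (z : 𝒵) : ℝ :=
  ∑ n, ∑ f, extMNEFZ p K m n e f z

/-- Marginal of the extension on `(N, F, Z)`. -/
def extNFZ (p : 𝒳 → 𝒴 → 𝒵 → ℳ → 𝒩 → ℝ) (K : ℕ) (n : 𝒩) (f : Fin K) (z : 𝒵) : ℝ :=
  ∑ m, ∑ e, extMNEFZ p K m n e f z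

/-!
The test set `𝒜` collects the tuples `(m, n, e, f, z)` produced, with positive probability, by
some `(x, y)` on which the three density-ratio bounds of `hPr` hold. Because `K p(m|x)` and
`K p(n|y)` are integers, `E` and `F` lose no mass, so `𝒜` has at least the probability of that
event under `p_{MNEFZ}`.

Each of the other three probabilities is a sum of masses weighted by the number of points of `𝒜`
in a fibre. For fixed `(m, e, z)` the admissible `f` satisfy `f ≤ K δ 2^{R₂} p(n|m,z)`, which
sums over `n` to `K δ 2^{R₂}`; `(n, f, z)` is symmetric. For fixed `z` and `(m, n)` the admissible
`(e, f)` are lattice points in a box `[1, W] × [1, H]` below the hyperbola `e f ≤ C`, and there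
are at most `2 C log (1 + W H / C)` of them. Summed over `(m, n)` these logarithms contribute the
entropy of `p_{M|Z=z}`, at most `log |ℳ|`, which the factor `log (max(|ℳ|, |𝒩|) / δ)` absorbs.
-/

theorem card_le_of_forall_succ_le {s : Finset ℕ} {B : ℝ} (hB : 0 ≤ B)
    (hs : ∀ b ∈ s, (b : ℝ) + 1 ≤ B) : (#s : ℝ) ≤ B := by
  have hsub : s ⊆ range ⌊B⌋₊ := fun b hb =>
    mem_range.2 (Nat.lt_of_succ_le (Nat.le_floor (by push_cast; exact hs b hb)))
  calc (#s : ℝ) ≤ ⌊B⌋₊ := by exact_mod_cast (card_le_card hsub).trans (card_range _).le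
    _ ≤ B := Nat.floor_le hB

theorem card_fin_le_of_forall_succ_le {K : ℕ} {s : Finset (Fin K)} {B : ℝ} (hB : 0 ≤ B)
    (hs : ∀ e ∈ s, ((e : ℕ) : ℝ) + 1 ≤ B) : (#s : ℝ) ≤ B := by
  rw [← card_image_of_injective s Fin.val_injective]
  exact card_le_of_forall_succ_le hB (by simpa using hs)

theorem one_div_add_one_le_log_sub_log {u : ℝ} (hu : 0 < u) :
    1 / (u + 1) ≤ log (u + 1) - log u := by
  have h := one_sub_inv_le_log_of_pos (div_pos (by linarith : 0 < u + 1) hu)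
  rw [log_div (by linarith) hu.ne', inv_div] at h
  calc 1 / (u + 1) = 1 - u / (u + 1) := by field_simp; ring
    _ ≤ _ := h

theorem min_le_two_mul_div_add {H C u : ℝ} (hH : 0 < H) (hC : 0 < C) (hu : 0 < u) :
    min H (C / u) ≤ 2 * C / (u + C / H) := by
  rw [le_div_iff₀ (by positivity)]
  rcases le_total (u * H) C with h | h
  · calc min H (C / u) * (u + C / H) ≤ H * (u + C / H) := by gcongr; exact min_le_left _ _
      _ = u * H + C := by field_simp
      _ ≤ 2 * C := by linarith
  · calc min H (C / u) * (u + C / H) ≤ C / u * (u + C / H) := by gcongr; exact min_le_right _ _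
      _ = C + C / (u * H) * C := by field_simp
      _ ≤ C + 1 * C := by gcongr; exact div_le_one_of_le₀ h (by positivity)
      _ = 2 * C := by ring

theorem sum_range_min_div_le {H C : ℝ} (hH : 0 < H) (hC : 0 < C) (N : ℕ) :
    ∑ a ∈ range N, min H (C / (a + 1)) ≤ 2 * C * log (1 + N * H / C) := by
  have hD : 0 < C / H := div_pos hC hH
  calc ∑ a ∈ range N, min H (C / (a + 1))
      ≤ ∑ a ∈ range N, 2 * C * (log ((a + 1 : ℕ) + C / H) - log (a + C / H)) := by
        refine sum_le_sum fun a _ => (min_le_two_mul_div_add hH hC (by positivity)).trans ?_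
        have h := one_div_add_one_le_log_sub_log (u := a + C / H) (by positivity)
        calc 2 * C / (a + 1 + C / H) = 2 * C * (1 / (a + C / H + 1)) := by ring
          _ ≤ 2 * C * (log (a + C / H + 1) - log (a + C / H)) :=
              mul_le_mul_of_nonneg_left h (by positivity)
          _ = _ := by push_cast; ring_nf
    _ = 2 * C * (log (N + C / H) - log (C / H)) := by
        rw [← mul_sum, sum_range_sub (fun a => log (a + C / H))]
        simp
    _ = 2 * C * log (1 + N * H / C) := by
        rw [← log_div (by positivity) hD.ne']
        congr 2
        field_simp
        ring

theorem card_le_two_mul_log_of_mul_le {s : Finset (ℕ × ℕ)} {W H C : ℝ} (hW : 0 ≤ W)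
    (hH : 0 < H) (hC : 0 < C)
    (hs : ∀ ab ∈ s, (ab.1 : ℝ) + 1 ≤ W ∧ (ab.2 : ℝ) + 1 ≤ H ∧ ((ab.1 : ℝ) + 1) * (ab.2 + 1) ≤ C) :
    (#s : ℝ) ≤ 2 * C * log (1 + W * H / C) := by
  have hfiber : ∀ a, (#{ab ∈ s | ab.1 = a} : ℝ) ≤ min H (C / (a + 1)) := by
    intro a
    rw [← card_image_of_injOn (f := Prod.snd) fun ab hab ab' hab' h =>
      Prod.ext ((mem_filter.1 hab).2.trans (mem_filter.1 hab').2.symm) h]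
    refine card_le_of_forall_succ_le (by positivity) fun b hb => ?_
    obtain ⟨ab, hab, rfl⟩ := mem_image.1 hb
    obtain ⟨habs, rfl⟩ := mem_filter.1 hab
    obtain ⟨-, h2, h3⟩ := hs ab habs
    exact le_min h2 ((le_div_iff₀' (by positivity)).2 h3)
  have hmaps : ∀ ab ∈ s, ab.1 ∈ range ⌊W⌋₊ := fun ab hab =>
    mem_range.2 (Nat.lt_of_succ_le (Nat.le_floor (by push_cast; exact (hs ab hab).1)))
  calc (#s : ℝ) = ∑ a ∈ range ⌊W⌋₊, (#{ab ∈ s | ab.1 = a} : ℝ) := by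
        exact_mod_cast card_eq_sum_card_fiberwise hmaps
    _ ≤ ∑ a ∈ range ⌊W⌋₊, min H (C / (a + 1)) := sum_le_sum fun a _ => hfiber a
    _ ≤ 2 * C * log (1 + ⌊W⌋₊ * H / C) := sum_range_min_div_le hH hC _
    _ ≤ 2 * C * log (1 + W * H / C) := by
        gcongr
        exact Nat.floor_le hW

theorem log_one_add_mul_le {r u : ℝ} (hr : 0 ≤ r) (hu : 1 ≤ u) :
    log (1 + r * u) ≤ log (1 + r) + log u := by
  rw [← log_mul (by positivity) (by positivity)]
  exact log_le_log (by positivity) (by nlinarith)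

theorem sum_negMulLog_le_log_card {ι : Type*} [Fintype ι] {P : ι → ℝ} (hP0 : ∀ i, 0 ≤ P i)
    (hP1 : ∑ i, P i = 1) : ∑ i, negMulLog (P i) ≤ log (Fintype.card ι) := by
  have hc : (0 : ℝ) < Fintype.card ι := by
    rcases isEmpty_or_nonempty ι with h | h
    · simp at hP1
    · exact_mod_cast Fintype.card_pos
  have h := concaveOn_negMulLog.le_map_sum (t := univ) (w := fun _ => (Fintype.card ι : ℝ)⁻¹)
    (p := P) (fun _ _ => by positivity) (by simp [hc.ne']) (fun i _ => hP0 i)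
  have hinv : negMulLog (Fintype.card ι : ℝ)⁻¹ = (Fintype.card ι : ℝ)⁻¹ * log (Fintype.card ι) := by
    simp [negMulLog, log_inv]
  simp only [smul_eq_mul, ← mul_sum, hP1, mul_one, hinv] at h
  exact le_of_mul_le_mul_left h (by positivity)

theorem pos_and_le_quarter_of_inv_sqrt_eq_nat {δ : ℝ}
    (h : ∃ k : ℕ, 1 < k ∧ (k : ℝ) = 1 / √δ) : 0 < δ ∧ δ ≤ 1 / 4 := by
  obtain ⟨k, hk, hkδ⟩ := h
  have hk2 : (2 : ℝ) ≤ 1 / √δ := hkδ ▸ by exact_mod_cast hk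
  have hs : 0 < √δ := by
    refine (sqrt_nonneg δ).lt_of_ne fun h0 => ?_
    rw [← h0, div_zero] at hk2
    norm_num at hk2
  have hδ := sqrt_pos.1 hs
  rw [le_div_iff₀ hs] at hk2
  exact ⟨hδ, by nlinarith [sq_sqrt hδ.le]⟩

theorem logb_two_div_pos_and_log_le {c C δ : ℝ} (hc : 1 ≤ c) (hcC : c ≤ C) (hδ0 : 0 < δ)
    (hδ1 : δ < 1) : 0 < logb 2 (C / δ) ∧ log c ≤ logb 2 (C / δ) := by
  have hCδ : 1 < C / δ := (one_lt_div hδ0).2 (hδ1.trans_le (hc.trans hcC))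
  refine ⟨logb_pos one_lt_two hCδ, ?_⟩
  calc log c ≤ log (C / δ) :=
        log_le_log (by linarith) (hcC.trans (le_div_self (by linarith) hδ0 hδ1.le))
    _ ≤ log (C / δ) / log 2 := le_div_self (log_nonneg hCδ.le) (log_pos one_lt_two)
        (by linarith [log_two_lt_d9])

theorem two_mul_log_one_add_div_le {δ L c R₁ R₂ : ℝ} (hδ0 : 0 < δ) (hδ : δ ≤ 1 / 4) (hL : 0 < L)
    (hc : log c ≤ L) :
    2 * (δ ^ 4 * 2 ^ (R₁ + R₂ - logb 2 L)) *
        (log (1 + δ * 2 ^ R₁ * (δ * 2 ^ R₂) / (δ ^ 4 * 2 ^ (R₁ + R₂ - logb 2 L))) + log c) ≤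
      δ * 2 ^ (R₁ + R₂) := by
  rw [rpow_sub two_pos, rpow_logb two_pos (by norm_num) hL]
  have hratio : δ * 2 ^ R₁ * (δ * 2 ^ R₂) / (δ ^ 4 * ((2 : ℝ) ^ (R₁ + R₂) / L)) = L / δ ^ 2 := by
    rw [rpow_add two_pos]
    field_simp
  rw [hratio]
  have hlog : log (1 + L / δ ^ 2) ≤ L / δ ^ 2 := by
    linarith [log_le_sub_one_of_pos (show 0 < 1 + L / δ ^ 2 by positivity)]
  have hT : (0 : ℝ) < 2 ^ (R₁ + R₂) := by positivity
  calc _ ≤ 2 * (δ ^ 4 * (2 ^ (R₁ + R₂) / L)) * (L / δ ^ 2 + L) := by gcongr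
    _ = (2 * δ + 2 * δ ^ 3) * (δ * 2 ^ (R₁ + R₂)) := by field_simp
    _ ≤ 1 * (δ * 2 ^ (R₁ + R₂)) := by gcongr; nlinarith
    _ = _ := one_mul _

theorem sum_comp_le_of_card_fiber_le {ι κ : Type*} [Fintype κ] [DecidableEq κ] (s : Finset ι)
    (f : ι → κ) {g : κ → ℝ} (hg : ∀ k, 0 ≤ g k) {B : ℝ}
    (hB : ∀ k, 0 < g k → (#{i ∈ s | f i = k} : ℝ) ≤ B) :
    ∑ i ∈ s, g (f i) ≤ B * ∑ k, g k := by
  rw [← sum_fiberwise s f, mul_sum]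
  refine sum_le_sum fun k _ => ?_
  rw [sum_congr rfl fun i hi => congrArg g (mem_filter.1 hi).2, sum_const, nsmul_eq_mul]
  rcases (hg k).eq_or_lt with h | h
  · simp [← h]
  · exact mul_le_mul_of_nonneg_right (hB k h) h.le

theorem ite_one_div_nonneg (a : ℕ) (c : ℝ) : 0 ≤ if (a : ℝ) + 1 ≤ c then 1 / c else 0 := by
  split_ifs with h
  · exact one_div_nonneg.2 (by linarith [a.cast_nonneg (α := ℝ)])
  · exact le_rfl

theorem sum_ite_le_one (K : ℕ) (c : ℝ) :
    ∑ e : Fin K, (if ((e : ℕ) : ℝ) + 1 ≤ c then 1 / c else 0) ≤ 1 := by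
  rw [← sum_filter, sum_const, nsmul_eq_mul]
  rcases le_or_gt c 0 with hc | hc
  · exact (mul_nonpos_of_nonneg_of_nonpos (Nat.cast_nonneg _) (one_div_nonpos.2 hc)).trans
      zero_le_one
  · calc (#{e : Fin K | ((e : ℕ) : ℝ) + 1 ≤ c} : ℝ) * (1 / c) ≤ c * (1 / c) := by
          gcongr
          exact card_fin_le_of_forall_succ_le hc.le fun e he => (mem_filter.1 he).2
      _ = 1 := by field_simp

theorem sum_ite_eq_one {K j : ℕ} (hj : 0 < j) (hjK : j ≤ K) :
    ∑ e : Fin K, (if ((e : ℕ) : ℝ) + 1 ≤ j then 1 / (j : ℝ) else 0) = 1 := by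
  have hfilter : ∀ e : Fin K, ((e : ℕ) : ℝ) + 1 ≤ j ↔ (e : ℕ) < j := fun e => by
    rw [← Nat.cast_add_one, Nat.cast_le, Nat.succ_le_iff]
  simp_rw [hfilter]
  rw [← sum_filter, sum_const, nsmul_eq_mul, Fin.card_filter_val_lt, min_eq_right hjK]
  field_simp

section Marginals

variable {p : 𝒳 → 𝒴 → 𝒵 → ℳ → 𝒩 → ℝ}

theorem margMZ_eq_sum (m : ℳ) (z : 𝒵) : margMZ p m z = ∑ n, margMNZ p m n z := sum_comm_cycle

theorem margNZ_eq_sum (n : 𝒩) (z : 𝒵) : margNZ p n z = ∑ m, margMNZ p m n z := sum_comm_cycle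

theorem margZ_eq_sum (z : 𝒵) : margZ p z = ∑ m, margMZ p m z := sum_comm_cycle

theorem sum_margZ (hp : IsDist p) : ∑ z, margZ p z = 1 := by
  rw [← hp.2]
  exact sum_comm_cycle.symm

theorem margMNZ_nonneg (hp : ∀ x y z m n, 0 ≤ p x y z m n) (m : ℳ) (n : 𝒩) (z : 𝒵) :
    0 ≤ margMNZ p m n z :=
  sum_nonneg fun x _ => sum_nonneg fun y _ => hp x y z m n

theorem margMZ_nonneg (hp : ∀ x y z m n, 0 ≤ p x y z m n) (m : ℳ) (z : 𝒵) : 0 ≤ margMZ p m z :=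
  sum_nonneg fun x _ => sum_nonneg fun y _ => sum_nonneg fun n _ => hp x y z m n

theorem condM_NZ_nonneg (hp : ∀ x y z m n, 0 ≤ p x y z m n) (m : ℳ) (n : 𝒩) (z : 𝒵) :
    0 ≤ condM_NZ p m n z :=
  div_nonneg (margMNZ_nonneg hp m n z)
    (by rw [margNZ_eq_sum]; exact sum_nonneg fun m _ => margMNZ_nonneg hp m n z)

theorem condN_MZ_nonneg (hp : ∀ x y z m n, 0 ≤ p x y z m n) (m : ℳ) (n : 𝒩) (z : 𝒵) :
    0 ≤ condN_MZ p n m z :=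
  div_nonneg (margMNZ_nonneg hp m n z) (margMZ_nonneg hp m z)

theorem margMNZ_le_margMZ (hp : ∀ x y z m n, 0 ≤ p x y z m n) (m : ℳ) (n : 𝒩) (z : 𝒵) :
    margMNZ p m n z ≤ margMZ p m z := by
  rw [margMZ_eq_sum]
  exact single_le_sum (fun n _ => margMNZ_nonneg hp m n z) (mem_univ n)

theorem margMNZ_le_margNZ (hp : ∀ x y z m n, 0 ≤ p x y z m n) (m : ℳ) (n : 𝒩) (z : 𝒵) :
    margMNZ p m n z ≤ margNZ p n z := by
  rw [margNZ_eq_sum]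
  exact single_le_sum (fun m _ => margMNZ_nonneg hp m n z) (mem_univ m)

theorem margMZ_le_margZ (hp : ∀ x y z m n, 0 ≤ p x y z m n) (m : ℳ) (z : 𝒵) :
    margMZ p m z ≤ margZ p z := by
  rw [margZ_eq_sum]
  exact single_le_sum (fun m _ => margMZ_nonneg hp m z) (mem_univ m)

theorem le_margMNZ (hp : ∀ x y z m n, 0 ≤ p x y z m n) (x : 𝒳) (y : 𝒴) (z : 𝒵) (m : ℳ) (n : 𝒩) :
    p x y z m n ≤ margMNZ p m n z := by
  simp only [margMNZ, ← Fintype.sum_prod_type']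
  exact single_le_sum (f := fun t : 𝒳 × 𝒴 => p t.1 t.2 z m n) (fun _ _ => hp ..) (mem_univ (x, y))

theorem le_margX (hp : ∀ x y z m n, 0 ≤ p x y z m n) (x : 𝒳) (y : 𝒴) (z : 𝒵) (m : ℳ) (n : 𝒩) :
    p x y z m n ≤ margX p x := by
  simp only [margX, ← Fintype.sum_prod_type']
  exact single_le_sum (f := fun t : 𝒴 × 𝒵 × ℳ × 𝒩 => p x t.1 t.2.1 t.2.2.1 t.2.2.2)
    (fun _ _ => hp ..) (mem_univ (y, z, m, n))

theorem le_margY (hp : ∀ x y z m n, 0 ≤ p x y z m n) (x : 𝒳) (y : 𝒴) (z : 𝒵) (m : ℳ) (n : 𝒩) :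
    p x y z m n ≤ margY p y := by
  simp only [margY, ← Fintype.sum_prod_type']
  exact single_le_sum (f := fun t : 𝒳 × 𝒵 × ℳ × 𝒩 => p t.1 y t.2.1 t.2.2.1 t.2.2.2)
    (fun _ _ => hp ..) (mem_univ (x, z, m, n))

theorem condMX_le_one (hp : ∀ x y z m n, 0 ≤ p x y z m n) (x : 𝒳) (m : ℳ) : condMX p x m ≤ 1 := by
  refine div_le_one_of_le₀ ?_ (sum_nonneg fun y _ => sum_nonneg fun z _ => sum_nonneg fun m _ =>
    sum_nonneg fun n _ => hp ..)
  unfold margXM margX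
  gcongr with y _ z _
  exact single_le_sum (f := fun m => ∑ n, p x y z m n) (fun m _ => sum_nonneg fun n _ => hp ..)
    (mem_univ m)

theorem condNY_le_one (hp : ∀ x y z m n, 0 ≤ p x y z m n) (y : 𝒴) (n : 𝒩) : condNY p y n ≤ 1 := by
  refine div_le_one_of_le₀ ?_ (sum_nonneg fun x _ => sum_nonneg fun z _ => sum_nonneg fun m _ =>
    sum_nonneg fun n _ => hp ..)
  unfold margYN margY
  gcongr with x _ z _ m _
  exact single_le_sum (f := fun n => p x y z m n) (fun n _ => hp ..) (mem_univ n)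

theorem sum_condN_MZ_le_one (m : ℳ) (z : 𝒵) : ∑ n, condN_MZ p n m z ≤ 1 := by
  simp only [condN_MZ, ← sum_div, ← margMZ_eq_sum]
  exact div_self_le_one _

theorem sum_condM_NZ_le_one (n : 𝒩) (z : 𝒵) : ∑ m, condM_NZ p m n z ≤ 1 := by
  simp only [condM_NZ, ← sum_div, ← margNZ_eq_sum]
  exact div_self_le_one _

theorem sum_condMN_Z (m : ℳ) (z : 𝒵) : ∑ n, condMN_Z p m n z = margMZ p m z / margZ p z := by
  simp only [condMN_Z, ← sum_div, ← margMZ_eq_sum]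

theorem IsDist.nonempty_M (hp : IsDist p) : Nonempty ℳ := by
  by_contra h
  rw [not_nonempty_iff] at h
  simpa using hp.2

end Marginals

section Extension

variable {p : 𝒳 → 𝒴 → 𝒵 → ℳ → 𝒩 → ℝ} {K : ℕ}

theorem sum_extEF_eq_mul (x : 𝒳) (y : 𝒴) (z : 𝒵) (m : ℳ) (n : 𝒩) :
    ∑ e : Fin K, ∑ f : Fin K, extEF p K x y z m n e f = p x y z m n *
      (∑ e : Fin K, if ((e : ℕ) : ℝ) + 1 ≤ K * condMX p x m then 1 / (K * condMX p x m) else 0) *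
      (∑ f : Fin K, if ((f : ℕ) : ℝ) + 1 ≤ K * condNY p y n then 1 / (K * condNY p y n) else 0) :=
  by simp only [extEF, ← mul_sum, ← sum_mul]

theorem sum_extEF_le (hp : ∀ x y z m n, 0 ≤ p x y z m n) (x : 𝒳) (y : 𝒴) (z : 𝒵) (m : ℳ)
    (n : 𝒩) : ∑ e : Fin K, ∑ f : Fin K, extEF p K x y z m n e f ≤ p x y z m n := by
  rw [sum_extEF_eq_mul]
  exact (mul_le_of_le_one_right (mul_nonneg (hp x y z m n)
    (sum_nonneg fun _ _ => ite_one_div_nonneg _ _)) (sum_ite_le_one _ _)).trans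
    (mul_le_of_le_one_right (hp x y z m n) (sum_ite_le_one _ _))

theorem sum_extEF_eq (hp : ∀ x y z m n, 0 ≤ p x y z m n) {x : 𝒳} {y : 𝒴} (z : 𝒵) {m : ℳ} {n : 𝒩}
    (hM : ∃ j : ℕ, 0 < j ∧ (j : ℝ) = K * condMX p x m)
    (hN : ∃ j : ℕ, 0 < j ∧ (j : ℝ) = K * condNY p y n) :
    ∑ e : Fin K, ∑ f : Fin K, extEF p K x y z m n e f = p x y z m n := by
  obtain ⟨i, hi, hiM⟩ := hM
  obtain ⟨j, hj, hjN⟩ := hN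
  have hiK : i ≤ K := by
    exact_mod_cast hiM.trans_le (mul_le_of_le_one_right K.cast_nonneg (condMX_le_one hp x m))
  have hjK : j ≤ K := by
    exact_mod_cast hjN.trans_le (mul_le_of_le_one_right K.cast_nonneg (condNY_le_one hp y n))
  rw [sum_extEF_eq_mul, ← hiM, ← hjN, sum_ite_eq_one hi hiK, sum_ite_eq_one hj hjK, mul_one,
    mul_one]

theorem extEF_nonneg (hp : ∀ x y z m n, 0 ≤ p x y z m n) (x : 𝒳) (y : 𝒴) (z : 𝒵) (m : ℳ)
    (n : 𝒩) (e f : Fin K) : 0 ≤ extEF p K x y z m n e f := by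
  exact mul_nonneg (mul_nonneg (hp x y z m n) (ite_one_div_nonneg _ _)) (ite_one_div_nonneg _ _)

theorem extMNEFZ_nonneg (hp : ∀ x y z m n, 0 ≤ p x y z m n) (m : ℳ) (n : 𝒩) (e f : Fin K)
    (z : 𝒵) : 0 ≤ extMNEFZ p K m n e f z :=
  sum_nonneg fun x _ => sum_nonneg fun y _ => extEF_nonneg hp x y z m n e f

theorem sum_extEF_le_one (hp : IsDist p) :
    ∑ x, ∑ y, ∑ z, ∑ m, ∑ n, ∑ e : Fin K, ∑ f : Fin K, extEF p K x y z m n e f ≤ 1 := by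
  rw [← hp.2]
  gcongr with x _ y _ z _ m _ n _
  exact sum_extEF_le hp.1 x y z m n

theorem sum_extMEZ_le_one (hp : IsDist p) :
    ∑ k : ℳ × Fin K × 𝒵, extMEZ p K k.1 k.2.1 k.2.2 ≤ 1 := by
  refine le_of_eq_of_le ?_ (sum_extEF_le_one (K := K) hp)
  simp only [extMEZ, extMNEFZ, ← Fintype.sum_prod_type']
  exact Fintype.sum_equiv ⟨fun ⟨⟨m, e, z⟩, n, f, x, y⟩ => (x, y, z, m, n, e, f),
    fun ⟨x, y, z, m, n, e, f⟩ => ⟨⟨m, e, z⟩, n, f, x, y⟩, fun _ => rfl, fun _ => rfl⟩ _ _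
    fun _ => rfl

theorem sum_extNFZ_le_one (hp : IsDist p) :
    ∑ k : 𝒩 × Fin K × 𝒵, extNFZ p K k.1 k.2.1 k.2.2 ≤ 1 := by
  refine le_of_eq_of_le ?_ (sum_extEF_le_one (K := K) hp)
  simp only [extNFZ, extMNEFZ, ← Fintype.sum_prod_type']
  exact Fintype.sum_equiv ⟨fun ⟨⟨n, f, z⟩, m, e, x, y⟩ => (x, y, z, m, n, e, f),
    fun ⟨x, y, z, m, n, e, f⟩ => ⟨⟨n, f, z⟩, m, e, x, y⟩, fun _ => rfl, fun _ => rfl⟩ _ _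
    fun _ => rfl

theorem of_extEF_ne_zero {x : 𝒳} {y : 𝒴} {z : 𝒵} {m : ℳ} {n : 𝒩} {e f : Fin K}
    (h : extEF p K x y z m n e f ≠ 0) :
    p x y z m n ≠ 0 ∧ ((e : ℕ) : ℝ) + 1 ≤ K * condMX p x m ∧
      ((f : ℕ) : ℝ) + 1 ≤ K * condNY p y n := by
  simp only [extEF, ne_eq, mul_eq_zero, not_or, ite_eq_right_iff, not_forall] at h
  exact ⟨h.1.1, h.1.2.1, h.2.1⟩

theorem sum_reindex_mnefz (h : 𝒳 → 𝒴 → 𝒵 → ℳ → 𝒩 → Fin K → Fin K → ℝ) :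
    ∑ x, ∑ y, ∑ z, ∑ m, ∑ n, ∑ e, ∑ f, h x y z m n e f =
      ∑ t : ℳ × 𝒩 × Fin K × Fin K × 𝒵, ∑ x, ∑ y, h x y t.2.2.2.2 t.1 t.2.1 t.2.2.1 t.2.2.2.1 := by
  simp only [← Fintype.sum_prod_type']
  exact Fintype.sum_equiv ⟨fun ⟨x, y, z, m, n, e, f⟩ => ⟨⟨m, n, e, f, z⟩, x, y⟩,
    fun ⟨⟨m, n, e, f, z⟩, x, y⟩ => (x, y, z, m, n, e, f), fun _ => rfl, fun _ => rfl⟩ _ _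
    fun _ => rfl

end Extension

/-- The event of `hPr` with general thresholds. An `abbrev`, so that `if DensityRatioBounds ..`
uses the same `Decidable` instance as the `if` in `hPr`. -/
abbrev DensityRatioBounds (p : 𝒳 → 𝒴 → 𝒵 → ℳ → 𝒩 → ℝ) (a₁ a₂ a₃ : ℝ) (x : 𝒳) (y : 𝒴) (z : 𝒵)
    (m : ℳ) (n : 𝒩) : Prop :=
  condMX p x m / condM_NZ p m n z ≤ a₁ ∧ condNY p y n / condN_MZ p n m z ≤ a₂ ∧
    condMX p x m * condNY p y n / condMN_Z p m n z ≤ a₃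

def Accepts (p : 𝒳 → 𝒴 → 𝒵 → ℳ → 𝒩 → ℝ) (K : ℕ) (a₁ a₂ a₃ : ℝ) (m : ℳ) (n : 𝒩) (e f : Fin K)
    (z : 𝒵) : Prop :=
  ∃ x y, 0 < p x y z m n ∧ DensityRatioBounds p a₁ a₂ a₃ x y z m n ∧
    ((e : ℕ) : ℝ) + 1 ≤ K * condMX p x m ∧ ((f : ℕ) : ℝ) + 1 ≤ K * condNY p y n

def acceptanceSet (p : 𝒳 → 𝒴 → 𝒵 → ℳ → 𝒩 → ℝ) (K : ℕ) (a₁ a₂ a₃ : ℝ) :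
    Finset (ℳ × 𝒩 × Fin K × Fin K × 𝒵) :=
  {t | Accepts p K a₁ a₂ a₃ t.1 t.2.1 t.2.2.1 t.2.2.2.1 t.2.2.2.2}

section Acceptance

variable {p : 𝒳 → 𝒴 → 𝒵 → ℳ → 𝒩 → ℝ} {K : ℕ} {a₁ a₂ a₃ : ℝ}

theorem Accepts.bounds (hp : ∀ x y z m n, 0 ≤ p x y z m n) {m : ℳ} {n : 𝒩} {e f : Fin K} {z : 𝒵}
    (h : Accepts p K a₁ a₂ a₃ m n e f z) :
    0 < margMNZ p m n z ∧ ((e : ℕ) : ℝ) + 1 ≤ K * a₁ * condM_NZ p m n z ∧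
      ((f : ℕ) : ℝ) + 1 ≤ K * a₂ * condN_MZ p n m z ∧
      (((e : ℕ) : ℝ) + 1) * (((f : ℕ) : ℝ) + 1) ≤ K ^ 2 * a₃ * condMN_Z p m n z := by
  obtain ⟨x, y, hpos, ⟨h₁, h₂, h₃⟩, he, hf⟩ := h
  have hMNZ := hpos.trans_le (le_margMNZ hp x y z m n)
  have hMZ := hMNZ.trans_le (margMNZ_le_margMZ hp m n z)
  rw [div_le_iff₀ (show 0 < condM_NZ p m n z from
    div_pos hMNZ (hMNZ.trans_le (margMNZ_le_margNZ hp m n z)))] at h₁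
  rw [div_le_iff₀ (show 0 < condN_MZ p n m z from div_pos hMNZ hMZ)] at h₂
  rw [div_le_iff₀ (show 0 < condMN_Z p m n z from
    div_pos hMNZ (hMZ.trans_le (margMZ_le_margZ hp m z)))] at h₃
  refine ⟨hMNZ, ?_, ?_, ?_⟩
  · calc _ ≤ K * condMX p x m := he
      _ ≤ K * (a₁ * condM_NZ p m n z) := by gcongr
      _ = _ := by ring
  · calc _ ≤ K * condNY p y n := hf
      _ ≤ K * (a₂ * condN_MZ p n m z) := by gcongr
      _ = _ := by ring
  · calc _ ≤ (K * condMX p x m) * (K * condNY p y n) :=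
          mul_le_mul he hf (by positivity) ((by positivity : (0 : ℝ) ≤ (e : ℕ) + 1).trans he)
      _ = K ^ 2 * (condMX p x m * condNY p y n) := by ring
      _ ≤ K ^ 2 * (a₃ * condMN_Z p m n z) := by gcongr
      _ = _ := by ring

theorem card_fiber_MEZ_le (hp : ∀ x y z m n, 0 ≤ p x y z m n) (ha₂ : 0 ≤ a₂) (m : ℳ) (e : Fin K)
    (z : 𝒵) :
    (#{t ∈ acceptanceSet p K a₁ a₂ a₃ | (t.1, t.2.2.1, t.2.2.2.2) = (m, e, z)} : ℝ) ≤ K * a₂ := by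
  have hsub : {t ∈ acceptanceSet p K a₁ a₂ a₃ | (t.1, t.2.2.1, t.2.2.2.2) = (m, e, z)} ⊆
      univ.biUnion fun n => image (fun f => (m, n, e, f, z))
        {f : Fin K | ((f : ℕ) : ℝ) + 1 ≤ K * a₂ * condN_MZ p n m z} := by
    rintro ⟨m', n, e', f, z'⟩ ht
    simp only [acceptanceSet, mem_filter, mem_univ, true_and, Prod.mk.injEq] at ht
    obtain ⟨hacc, rfl, rfl, rfl⟩ := ht
    exact mem_biUnion.2 ⟨n, mem_univ n,
      mem_image.2 ⟨f, mem_filter.2 ⟨mem_univ f, (hacc.bounds hp).2.2.1⟩, rfl⟩⟩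
  calc (#{t ∈ acceptanceSet p K a₁ a₂ a₃ | (t.1, t.2.2.1, t.2.2.2.2) = (m, e, z)} : ℝ)
      ≤ ∑ n, (#{f : Fin K | ((f : ℕ) : ℝ) + 1 ≤ K * a₂ * condN_MZ p n m z} : ℝ) := by
        exact_mod_cast (card_le_card hsub).trans
          (card_biUnion_le.trans (sum_le_sum fun n _ => card_image_le))
    _ ≤ ∑ n, K * a₂ * condN_MZ p n m z := sum_le_sum fun n _ =>
        card_fin_le_of_forall_succ_le (by have := condN_MZ_nonneg hp m n z; positivity)
          fun f hf => (mem_filter.1 hf).2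
    _ ≤ K * a₂ := by
        rw [← mul_sum]
        exact mul_le_of_le_one_right (by positivity) (sum_condN_MZ_le_one m z)

theorem card_fiber_NFZ_le (hp : ∀ x y z m n, 0 ≤ p x y z m n) (ha₁ : 0 ≤ a₁) (n : 𝒩) (f : Fin K)
    (z : 𝒵) :
    (#{t ∈ acceptanceSet p K a₁ a₂ a₃ | (t.2.1, t.2.2.2.1, t.2.2.2.2) = (n, f, z)} : ℝ) ≤
      K * a₁ := by
  have hsub : {t ∈ acceptanceSet p K a₁ a₂ a₃ | (t.2.1, t.2.2.2.1, t.2.2.2.2) = (n, f, z)} ⊆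
      univ.biUnion fun m => image (fun e => (m, n, e, f, z))
        {e : Fin K | ((e : ℕ) : ℝ) + 1 ≤ K * a₁ * condM_NZ p m n z} := by
    rintro ⟨m, n', e, f', z'⟩ ht
    simp only [acceptanceSet, mem_filter, mem_univ, true_and, Prod.mk.injEq] at ht
    obtain ⟨hacc, rfl, rfl, rfl⟩ := ht
    exact mem_biUnion.2 ⟨m, mem_univ m,
      mem_image.2 ⟨e, mem_filter.2 ⟨mem_univ e, (hacc.bounds hp).2.1⟩, rfl⟩⟩
  calc (#{t ∈ acceptanceSet p K a₁ a₂ a₃ | (t.2.1, t.2.2.2.1, t.2.2.2.2) = (n, f, z)} : ℝ)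
      ≤ ∑ m, (#{e : Fin K | ((e : ℕ) : ℝ) + 1 ≤ K * a₁ * condM_NZ p m n z} : ℝ) := by
        exact_mod_cast (card_le_card hsub).trans
          (card_biUnion_le.trans (sum_le_sum fun m _ => card_image_le))
    _ ≤ ∑ m, K * a₁ * condM_NZ p m n z := sum_le_sum fun m _ =>
        card_fin_le_of_forall_succ_le (by have := condM_NZ_nonneg hp m n z; positivity)
          fun e he => (mem_filter.1 he).2
    _ ≤ K * a₁ := by
        rw [← mul_sum]
        exact mul_le_of_le_one_right (by positivity) (sum_condM_NZ_le_one n z)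

theorem card_accepts_le (hp : ∀ x y z m n, 0 ≤ p x y z m n) (hK : 0 < K) (ha₁ : 0 ≤ a₁)
    (ha₂ : 0 < a₂) (ha₃ : 0 < a₃) (m : ℳ) (n : 𝒩) (z : 𝒵) :
    (#{ef : Fin K × Fin K | Accepts p K a₁ a₂ a₃ m n ef.1 ef.2 z} : ℝ) ≤
      2 * K ^ 2 * a₃ * condMN_Z p m n z *
        (log (1 + a₁ * a₂ / a₃) - log (margMZ p m z / margZ p z)) := by
  rcases (margMNZ_nonneg hp m n z).eq_or_lt with hMNZ | hMNZ
  · rw [filter_false_of_mem fun ef _ hacc => (hacc.bounds hp).1.ne' hMNZ.symm]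
    simp [condMN_Z, ← hMNZ]
  have hMZ := hMNZ.trans_le (margMNZ_le_margMZ hp m n z)
  have hNZ := hMNZ.trans_le (margMNZ_le_margNZ hp m n z)
  have hZ := hMZ.trans_le (margMZ_le_margZ hp m z)
  have hK' : (0 : ℝ) < K := Nat.cast_pos.2 hK
  have hW : 0 ≤ K * a₁ * condM_NZ p m n z := by unfold condM_NZ; positivity
  have hH : 0 < K * a₂ * condN_MZ p n m z := by unfold condN_MZ; positivity
  have hC : 0 < K ^ 2 * a₃ * condMN_Z p m n z := by unfold condMN_Z; positivity
  have hcount := card_le_two_mul_log_of_mul_le hW hH hC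
    (s := image (Prod.map Fin.val Fin.val)
      {ef : Fin K × Fin K | Accepts p K a₁ a₂ a₃ m n ef.1 ef.2 z})
    (by
      simp only [mem_image, mem_filter, mem_univ, true_and]
      rintro _ ⟨ef, hacc, rfl⟩
      exact (hacc.bounds hp).2)
  rw [card_image_of_injective _ (Fin.val_injective.prodMap Fin.val_injective)] at hcount
  have hratio : K * a₁ * condM_NZ p m n z * (K * a₂ * condN_MZ p n m z) /
      (K ^ 2 * a₃ * condMN_Z p m n z) ≤ a₁ * a₂ / a₃ * (margZ p z / margMZ p m z) := by
    simp only [condM_NZ, condN_MZ, condMN_Z]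
    calc _ = a₁ * a₂ / a₃ * (margZ p z / margMZ p m z) * (margMNZ p m n z / margNZ p n z) := by
          field_simp
      _ ≤ a₁ * a₂ / a₃ * (margZ p z / margMZ p m z) * 1 := by
          gcongr
          exact div_le_one_of_le₀ (margMNZ_le_margNZ hp m n z) hNZ.le
      _ = _ := mul_one _
  calc _ ≤ _ := hcount
    _ ≤ 2 * (K ^ 2 * a₃ * condMN_Z p m n z) *
          log (1 + a₁ * a₂ / a₃ * (margZ p z / margMZ p m z)) := by gcongr
    _ ≤ 2 * (K ^ 2 * a₃ * condMN_Z p m n z) *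
          (log (1 + a₁ * a₂ / a₃) + log (margZ p z / margMZ p m z)) := by
        gcongr
        exact log_one_add_mul_le (by positivity) ((one_le_div hMZ).2 (margMZ_le_margZ hp m z))
    _ = _ := by rw [← inv_div (margMZ p m z), log_inv]; ring

theorem card_fiber_Z_le (hp : ∀ x y z m n, 0 ≤ p x y z m n) (hK : 0 < K) (ha₁ : 0 ≤ a₁)
    (ha₂ : 0 < a₂) (ha₃ : 0 < a₃) (z : 𝒵) (hz : 0 < margZ p z) :
    (#{t ∈ acceptanceSet p K a₁ a₂ a₃ | t.2.2.2.2 = z} : ℝ) ≤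
      2 * K ^ 2 * a₃ * (log (1 + a₁ * a₂ / a₃) + log (Fintype.card ℳ)) := by
  set P : ℳ → ℝ := fun m => margMZ p m z / margZ p z
  have hsub : {t ∈ acceptanceSet p K a₁ a₂ a₃ | t.2.2.2.2 = z} ⊆
      univ.biUnion fun mn : ℳ × 𝒩 => image (fun ef => (mn.1, mn.2, ef.1, ef.2, z))
        {ef : Fin K × Fin K | Accepts p K a₁ a₂ a₃ mn.1 mn.2 ef.1 ef.2 z} := by
    rintro ⟨m, n, e, f, z'⟩ ht
    simp only [acceptanceSet, mem_filter, mem_univ, true_and] at ht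
    obtain ⟨hacc, rfl⟩ := ht
    exact mem_biUnion.2 ⟨(m, n), mem_univ _,
      mem_image.2 ⟨(e, f), mem_filter.2 ⟨mem_univ _, hacc⟩, rfl⟩⟩
  have hP : ∑ m, P m = 1 := by rw [← sum_div, ← margZ_eq_sum, div_self hz.ne']
  calc (#{t ∈ acceptanceSet p K a₁ a₂ a₃ | t.2.2.2.2 = z} : ℝ)
      ≤ ∑ mn : ℳ × 𝒩, (#{ef : Fin K × Fin K | Accepts p K a₁ a₂ a₃ mn.1 mn.2 ef.1 ef.2 z} : ℝ) := by
        exact_mod_cast (card_le_card hsub).trans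
          (card_biUnion_le.trans (sum_le_sum fun mn _ => card_image_le))
    _ ≤ ∑ m, ∑ n, 2 * K ^ 2 * a₃ * condMN_Z p m n z * (log (1 + a₁ * a₂ / a₃) - log (P m)) := by
        rw [Fintype.sum_prod_type]
        exact sum_le_sum fun m _ => sum_le_sum fun n _ => card_accepts_le hp hK ha₁ ha₂ ha₃ m n z
    _ = ∑ m, 2 * K ^ 2 * a₃ * (log (1 + a₁ * a₂ / a₃) * P m + negMulLog (P m)) := by
        refine sum_congr rfl fun m _ => ?_
        rw [← sum_mul, ← mul_sum, sum_condMN_Z, negMulLog]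
        ring
    _ = 2 * K ^ 2 * a₃ * (log (1 + a₁ * a₂ / a₃) * ∑ m, P m + ∑ m, negMulLog (P m)) := by
        rw [← mul_sum, sum_add_distrib, ← mul_sum]
    _ ≤ 2 * K ^ 2 * a₃ * (log (1 + a₁ * a₂ / a₃) + log (Fintype.card ℳ)) := by
        rw [hP, mul_one]
        gcongr
        exact sum_negMulLog_le_log_card (fun m => div_nonneg (margMZ_nonneg hp m z) hz.le) hP

theorem sum_acceptanceSet_extMEZ_mul_le (hp : IsDist p) (hK : 0 < K) (ha₂ : 0 ≤ a₂) :
    ∑ t ∈ acceptanceSet p K a₁ a₂ a₃,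
        extMEZ p K t.1 t.2.2.1 t.2.2.2.2 * (1 / ((Fintype.card 𝒩 : ℝ) * K)) ≤
      a₂ / Fintype.card 𝒩 := by
  rw [← sum_mul]
  calc _ ≤ K * a₂ * (∑ k : ℳ × Fin K × 𝒵, extMEZ p K k.1 k.2.1 k.2.2) *
        (1 / ((Fintype.card 𝒩 : ℝ) * K)) := by
        gcongr
        exact sum_comp_le_of_card_fiber_le (acceptanceSet p K a₁ a₂ a₃)
          (fun t => (t.1, t.2.2.1, t.2.2.2.2))
          (g := fun k => extMEZ p K k.1 k.2.1 k.2.2) (B := K * a₂)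
          (fun k => sum_nonneg fun n _ => sum_nonneg fun f _ => extMNEFZ_nonneg hp.1 ..)
          fun k _ => card_fiber_MEZ_le hp.1 ha₂ k.1 k.2.1 k.2.2
    _ ≤ K * a₂ * 1 * (1 / ((Fintype.card 𝒩 : ℝ) * K)) := by
        gcongr
        exact sum_extMEZ_le_one hp
    _ = a₂ / Fintype.card 𝒩 := by field_simp

theorem sum_acceptanceSet_extNFZ_mul_le (hp : IsDist p) (hK : 0 < K) (ha₁ : 0 ≤ a₁) :
    ∑ t ∈ acceptanceSet p K a₁ a₂ a₃,
        1 / ((Fintype.card ℳ : ℝ) * K) * extNFZ p K t.2.1 t.2.2.2.1 t.2.2.2.2 ≤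
      a₁ / Fintype.card ℳ := by
  rw [← mul_sum]
  calc _ ≤ 1 / ((Fintype.card ℳ : ℝ) * K) *
        (K * a₁ * ∑ k : 𝒩 × Fin K × 𝒵, extNFZ p K k.1 k.2.1 k.2.2) := by
        gcongr
        exact sum_comp_le_of_card_fiber_le (acceptanceSet p K a₁ a₂ a₃)
          (fun t => (t.2.1, t.2.2.2.1, t.2.2.2.2))
          (g := fun k => extNFZ p K k.1 k.2.1 k.2.2) (B := K * a₁)
          (fun k => sum_nonneg fun m _ => sum_nonneg fun e _ => extMNEFZ_nonneg hp.1 ..)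
          fun k _ => card_fiber_NFZ_le hp.1 ha₁ k.1 k.2.1 k.2.2
    _ ≤ 1 / ((Fintype.card ℳ : ℝ) * K) * (K * a₁ * 1) := by
        gcongr
        exact sum_extNFZ_le_one hp
    _ = a₁ / Fintype.card ℳ := by field_simp

theorem sum_acceptanceSet_margZ_mul_le (hp : IsDist p) (hK : 0 < K) (ha₁ : 0 ≤ a₁)
    (ha₂ : 0 < a₂) (ha₃ : 0 < a₃) :
    ∑ t ∈ acceptanceSet p K a₁ a₂ a₃,
        1 / ((Fintype.card ℳ : ℝ) * K) * (1 / ((Fintype.card 𝒩 : ℝ) * K)) * margZ p t.2.2.2.2 ≤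
      2 * a₃ * (log (1 + a₁ * a₂ / a₃) + log (Fintype.card ℳ)) /
        ((Fintype.card ℳ : ℝ) * Fintype.card 𝒩) := by
  rw [← mul_sum]
  calc _ ≤ 1 / ((Fintype.card ℳ : ℝ) * K) * (1 / ((Fintype.card 𝒩 : ℝ) * K)) *
        (2 * K ^ 2 * a₃ * (log (1 + a₁ * a₂ / a₃) + log (Fintype.card ℳ)) * ∑ z, margZ p z) := by
        gcongr
        exact sum_comp_le_of_card_fiber_le (acceptanceSet p K a₁ a₂ a₃) (fun t => t.2.2.2.2)
          (g := margZ p)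
          (B := 2 * K ^ 2 * a₃ * (log (1 + a₁ * a₂ / a₃) + log (Fintype.card ℳ)))
          (fun z => by rw [margZ_eq_sum]; exact sum_nonneg fun m _ => margMZ_nonneg hp.1 m z)
          fun z hz => card_fiber_Z_le hp.1 hK ha₁ ha₂ ha₃ z hz
    _ = _ := by rw [sum_margZ hp]; field_simp

theorem sum_densityRatioBounds_le (hp : IsDist p)
    (hKM : ∀ x m, 0 < margX p x → ∃ j : ℕ, 0 < j ∧ (j : ℝ) = K * condMX p x m)
    (hKN : ∀ y n, 0 < margY p y → ∃ j : ℕ, 0 < j ∧ (j : ℝ) = K * condNY p y n) :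
    ∑ x, ∑ y, ∑ z, ∑ m, ∑ n,
        (if DensityRatioBounds p a₁ a₂ a₃ x y z m n then p x y z m n else 0) ≤
      ∑ t ∈ acceptanceSet p K a₁ a₂ a₃, extMNEFZ p K t.1 t.2.1 t.2.2.1 t.2.2.2.1 t.2.2.2.2 := by
  set F : 𝒳 → 𝒴 → 𝒵 → ℳ → 𝒩 → Fin K → Fin K → ℝ := fun x y z m n e f =>
    if DensityRatioBounds p a₁ a₂ a₃ x y z m n then extEF p K x y z m n e f else 0 with hF
  have hterm : ∀ x y z m n, (if DensityRatioBounds p a₁ a₂ a₃ x y z m n then p x y z m n else 0) =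
      ∑ e, ∑ f, F x y z m n e f := by
    intro x y z m n
    simp only [hF, sum_ite_irrel, sum_const_zero]
    split_ifs
    · rcases (hp.1 x y z m n).eq_or_lt with h0 | hpos
      · simp [extEF, ← h0]
      · exact (sum_extEF_eq hp.1 z (hKM x m (hpos.trans_le (le_margX hp.1 x y z m n)))
          (hKN y n (hpos.trans_le (le_margY hp.1 x y z m n)))).symm
    · rfl
  have hout : ∀ t ∉ acceptanceSet p K a₁ a₂ a₃,
      ∑ x, ∑ y, F x y t.2.2.2.2 t.1 t.2.1 t.2.2.1 t.2.2.2.1 = 0 := by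
    intro t ht
    refine sum_eq_zero fun x _ => sum_eq_zero fun y _ => ite_eq_right_iff.2 fun hG => ?_
    by_contra hne
    obtain ⟨hp0, he, hf⟩ := of_extEF_ne_zero hne
    exact ht (mem_filter.2 ⟨mem_univ _, x, y, (hp.1 ..).lt_of_ne' hp0, hG, he, hf⟩)
  calc _ = ∑ x, ∑ y, ∑ z, ∑ m, ∑ n, ∑ e, ∑ f, F x y z m n e f := by simp only [hterm]
    _ = ∑ t : ℳ × 𝒩 × Fin K × Fin K × 𝒵, ∑ x, ∑ y, F x y t.2.2.2.2 t.1 t.2.1 t.2.2.1 t.2.2.2.1 :=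
        sum_reindex_mnefz F
    _ = ∑ t ∈ acceptanceSet p K a₁ a₂ a₃, ∑ x, ∑ y, F x y t.2.2.2.2 t.1 t.2.1 t.2.2.1 t.2.2.2.1 :=
        (sum_subset (subset_univ _) fun t _ ht => hout t ht).symm
    _ ≤ _ := sum_le_sum fun t _ => sum_le_sum fun x _ => sum_le_sum fun y _ => by
        simp only [hF]
        split_ifs
        exacts [le_rfl, extEF_nonneg hp.1 ..]

end Acceptance

/-- `S` and `T`, the uniform distributions on `ℳ × [K]` and `𝒩 × [K]`, enter through their masses
`1/(|ℳ|·K)` and `1/(|𝒩|·K)`. -/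
theorem exists_hypothesis_testing_set_general
    (p : 𝒳 → 𝒴 → 𝒵 → ℳ → 𝒩 → ℝ) (hdist : IsDist p)
    (ε δ : ℝ)
    (hδint : ∃ k : ℕ, 1 < k ∧ (k : ℝ) = 1 / Real.sqrt δ)
    (R₁ R₂ : ℝ)
    (hPr : 1 - ε ≤ ∑ x, ∑ y, ∑ z, ∑ m, ∑ n,
        (if condMX p x m / condM_NZ p m n z ≤ δ * (2 : ℝ) ^ R₁ ∧
            condNY p y n / condN_MZ p n m z ≤ δ * (2 : ℝ) ^ R₂ ∧
            condMX p x m * condNY p y n / condMN_Z p m n z ≤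
              δ ^ 4 * (2 : ℝ) ^ (R₁ + R₂ -
                logb 2 (logb 2 ((max (Fintype.card ℳ) (Fintype.card 𝒩) : ℝ) / δ)))
          then p x y z m n else 0))
    (K : ℕ) (hK : 0 < K)
    (hKM : ∀ x m, 0 < margX p x → ∃ j : ℕ, 0 < j ∧ (j : ℝ) = (K : ℝ) * condMX p x m)
    (hKN : ∀ y n, 0 < margY p y → ∃ j : ℕ, 0 < j ∧ (j : ℝ) = (K : ℝ) * condNY p y n) :
    ∃ 𝒜 : Finset (ℳ × 𝒩 × Fin K × Fin K × 𝒵),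
      (1 - ε - 5 * δ ≤
        ∑ t ∈ 𝒜, extMNEFZ p K t.1 t.2.1 t.2.2.1 t.2.2.2.1 t.2.2.2.2) ∧
      ((∑ t ∈ 𝒜, extMEZ p K t.1 t.2.2.1 t.2.2.2.2 *
          (1 / ((Fintype.card 𝒩 : ℝ) * (K : ℝ)))) ≤
        δ * (2 : ℝ) ^ R₂ / (Fintype.card 𝒩 : ℝ)) ∧
      ((∑ t ∈ 𝒜, (1 / ((Fintype.card ℳ : ℝ) * (K : ℝ))) *
          extNFZ p K t.2.1 t.2.2.2.1 t.2.2.2.2) ≤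
        δ * (2 : ℝ) ^ R₁ / (Fintype.card ℳ : ℝ)) ∧
      ((∑ t ∈ 𝒜, (1 / ((Fintype.card ℳ : ℝ) * (K : ℝ))) *
          (1 / ((Fintype.card 𝒩 : ℝ) * (K : ℝ))) * margZ p t.2.2.2.2) ≤
        δ * (2 : ℝ) ^ (R₁ + R₂) / ((Fintype.card ℳ : ℝ) * (Fintype.card 𝒩 : ℝ))) := by
  obtain ⟨hδ0, hδ⟩ := pos_and_le_quarter_of_inv_sqrt_eq_nat hδint
  set L := logb 2 ((max (Fintype.card ℳ) (Fintype.card 𝒩) : ℝ) / δ)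
  have := hdist.nonempty_M
  obtain ⟨hL, hlogM⟩ := logb_two_div_pos_and_log_le (c := Fintype.card ℳ)
    (by exact_mod_cast Fintype.card_pos) (le_max_left _ _) hδ0 (hδ.trans_lt (by norm_num))
  refine ⟨acceptanceSet p K (δ * 2 ^ R₁) (δ * 2 ^ R₂) (δ ^ 4 * 2 ^ (R₁ + R₂ - logb 2 L)),
    ?_, ?_, ?_, ?_⟩
  · exact (sub_le_self _ (by positivity)).trans
      (hPr.trans (sum_densityRatioBounds_le hdist hKM hKN))
  · exact sum_acceptanceSet_extMEZ_mul_le hdist hK (by positivity)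
  · exact sum_acceptanceSet_extNFZ_mul_le hdist hK (by positivity)
  · refine (sum_acceptanceSet_margZ_mul_le hdist hK (by positivity) (by positivity)
      (by positivity)).trans
      (div_le_div_of_nonneg_right (two_mul_log_one_add_div_le hδ0 hδ hL hlogM) (by positivity))

/-- Lemma 3.3: existence of the hypothesis-testing set `𝒜`.  Here `S`
is the uniform distribution on `ℳ × [K]` (mass `1/(|ℳ|·K)`) and `T` the uniform
distribution on `𝒩 × [K]` (mass `1/(|𝒩|·K)`). -/
theorem exists_hypothesis_testing_set
    (p : 𝒳 → 𝒴 → 𝒵 → ℳ → 𝒩 → ℝ) (hdist : IsDist p) (hMarkov : MarkovCond p)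
    (ε δ : ℝ) (hε0 : 0 < ε) (hε1 : ε < 1) (hδ0 : 0 < δ) (hδ1 : δ < 1)
    (hδint : ∃ k : ℕ, 1 < k ∧ (k : ℝ) = 1 / Real.sqrt δ)
    (R₁ R₂ : ℝ)
    (hPr : 1 - ε ≤ ∑ x, ∑ y, ∑ z, ∑ m, ∑ n,
        (if condMX p x m / condM_NZ p m n z ≤ δ * (2 : ℝ) ^ R₁ ∧
            condNY p y n / condN_MZ p n m z ≤ δ * (2 : ℝ) ^ R₂ ∧
            condMX p x m * condNY p y n / condMN_Z p m n z ≤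
              δ ^ 4 * (2 : ℝ) ^ (R₁ + R₂ -
                logb 2 (logb 2 ((max (Fintype.card ℳ) (Fintype.card 𝒩) : ℝ) / δ)))
          then p x y z m n else 0))
    (K : ℕ) (hK : 0 < K)
    (hKM : ∀ x m, 0 < margX p x → ∃ j : ℕ, 0 < j ∧ (j : ℝ) = (K : ℝ) * condMX p x m)
    (hKN : ∀ y n, 0 < margY p y → ∃ j : ℕ, 0 < j ∧ (j : ℝ) = (K : ℝ) * condNY p y n) :
    ∃ 𝒜 : Finset (ℳ × 𝒩 × Fin K × Fin K × 𝒵),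
      (1 - ε - 5 * δ ≤
        ∑ t ∈ 𝒜, extMNEFZ p K t.1 t.2.1 t.2.2.1 t.2.2.2.1 t.2.2.2.2) ∧
      ((∑ t ∈ 𝒜, extMEZ p K t.1 t.2.2.1 t.2.2.2.2 *
          (1 / ((Fintype.card 𝒩 : ℝ) * (K : ℝ)))) ≤
        δ * (2 : ℝ) ^ R₂ / (Fintype.card 𝒩 : ℝ)) ∧
      ((∑ t ∈ 𝒜, (1 / ((Fintype.card ℳ : ℝ) * (K : ℝ))) *
          extNFZ p K t.2.1 t.2.2.2.1 t.2.2.2.2) ≤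
        δ * (2 : ℝ) ^ R₁ / (Fintype.card ℳ : ℝ)) ∧
      ((∑ t ∈ 𝒜, (1 / ((Fintype.card ℳ : ℝ) * (K : ℝ))) *
          (1 / ((Fintype.card 𝒩 : ℝ) * (K : ℝ))) * margZ p t.2.2.2.2) ≤
        δ * (2 : ℝ) ^ (R₁ + R₂) / ((Fintype.card ℳ : ℝ) * (Fintype.card 𝒩 : ℝ))) :=
  exists_hypothesis_testing_set_general p hdist ε δ hδint R₁ R₂ hPr K hK hKM hKN

end
end

section
/- Let p and q be probability mass functions on a finite set with supp(p) ⊆ supp(q), let k ≥ 0, and suppose the KL divergence D(p‖q) := Σ_ω p(ω)·log(p(ω)/q(ω)) satisfies D(p‖q) ≤ k. Then for every δ ∈ (0,1): Pr_{ω~p}[ p(ω)/q(ω) > 2^{(k+1)/δ} ] ≤ δ. -/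
open Finset Real
open scoped Classical

noncomputable section

/-!
Split `D(p‖q)` over the tail `S = {p/q > 2^t}`, `t = (k+1)/δ`, and its complement. On `S` every
term is at least `t·p(ω)`, so that part is at least `t·p(S)`. On any set `A`, with `P = p(A)` and
`q(A) ≤ 1`, summing the tangent-line bounds `p log(p/q) ≥ p - P·q + p log P` shows that the terms
add up to at least `P log P ≥ -1/(e ln 2) > -1`. Hence `t·p(S) < k + 1 = t·δ`.
-/

theorem Real.neg_exp_neg_one_le_mul_log {x : ℝ} (hx : 0 ≤ x) : -exp (-1) ≤ x * log x := by
  rcases hx.eq_or_lt with rfl | hx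
  · simpa using (exp_pos _).le
  have h : -log x ≤ x⁻¹ * exp (-1) := by
    have := add_one_le_exp (-log x - 1)
    rw [sub_eq_add_neg, exp_add, exp_neg (log x), exp_log hx] at this
    linarith
  have := mul_le_mul_of_nonneg_left h hx.le
  rw [← mul_assoc, mul_inv_cancel₀ hx.ne', one_mul] at this
  linarith

theorem Real.exp_neg_one_lt_log_two : exp (-1) < log 2 := by
  linarith [exp_neg_one_lt_half, log_two_gt_d9]

/-- The tangent-line bound `log y ≥ 1 - 1/y` at `y = p / (l q)`. -/
theorem Real.sub_mul_add_mul_log_le_mul_log_div {p q l : ℝ} (hp : 0 ≤ p) (hq : 0 ≤ q)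
    (hpq : q = 0 → p = 0) (hl : 0 < l) : p - l * q + p * log l ≤ p * log (p / q) := by
  rcases hp.eq_or_lt with rfl | hp
  · simpa using mul_nonneg hl.le hq
  have hq : 0 < q := hq.lt_of_ne fun h => hp.ne' (hpq h.symm)
  have h := one_sub_inv_le_log_of_pos (div_pos hp (mul_pos hl hq))
  rw [inv_div, log_div hp.ne' (mul_pos hl hq).ne', log_mul hl.ne' hq.ne'] at h
  rw [log_div hp.ne' hq.ne']
  have := mul_le_mul_of_nonneg_left h hp.le
  rw [mul_sub, mul_one, mul_div_cancel₀ _ hp.ne'] at this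
  linarith

section Divergence

variable {ι : Type*} {s : Finset ι} {p q : ι → ℝ}

theorem neg_exp_neg_one_le_sum_mul_log_div (hp : ∀ i ∈ s, 0 ≤ p i) (hq : ∀ i ∈ s, 0 ≤ q i)
    (hpq : ∀ i ∈ s, q i = 0 → p i = 0) (hs : ∑ i ∈ s, q i ≤ 1) :
    -exp (-1) ≤ ∑ i ∈ s, p i * log (p i / q i) := by
  set P := ∑ i ∈ s, p i
  rcases (sum_nonneg hp).eq_or_lt with hP | hP
  · have hzero : ∀ i ∈ s, p i = 0 := (sum_eq_zero_iff_of_nonneg hp).1 hP.symm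
    rw [sum_eq_zero fun i hi => by rw [hzero i hi, zero_mul]]
    exact neg_nonpos.2 (exp_pos _).le
  have hsum : P - P * ∑ i ∈ s, q i + P * log P ≤ ∑ i ∈ s, p i * log (p i / q i) := by
    simpa only [sum_add_distrib, sum_sub_distrib, ← mul_sum, ← sum_mul] using
      sum_le_sum fun i hi => sub_mul_add_mul_log_le_mul_log_div (hp i hi) (hq i hi) (hpq i hi) hP
  nlinarith [neg_exp_neg_one_le_mul_log hP.le]

theorem neg_exp_neg_one_div_log_le_sum_mul_logb_div {b : ℝ} (hb : 1 < b)
    (hp : ∀ i ∈ s, 0 ≤ p i) (hq : ∀ i ∈ s, 0 ≤ q i)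
    (hpq : ∀ i ∈ s, q i = 0 → p i = 0) (hs : ∑ i ∈ s, q i ≤ 1) :
    -(exp (-1) / log b) ≤ ∑ i ∈ s, p i * logb b (p i / q i) := by
  simp only [logb, ← mul_div_assoc, ← sum_div, ← neg_div]
  exact div_le_div_of_nonneg_right (neg_exp_neg_one_le_sum_mul_log_div hp hq hpq hs)
    (log_pos hb).le

theorem mul_sum_le_sum_mul_logb_of_rpow_lt {b t : ℝ} (hb : 1 < b) (hp : ∀ i ∈ s, 0 ≤ p i)
    (hq : ∀ i ∈ s, b ^ t < q i) : t * ∑ i ∈ s, p i ≤ ∑ i ∈ s, p i * logb b (q i) := by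
  rw [mul_sum]
  refine sum_le_sum fun i hi => ?_
  rw [mul_comm t]
  refine mul_le_mul_of_nonneg_left ?_ (hp i hi)
  exact (le_logb_iff_rpow_le hb ((rpow_pos_of_pos (by linarith) t).trans (hq i hi))).2
    (hq i hi).le

end Divergence

theorem kl_divergence_markov_tail_general
    {α : Type*} [Fintype α] (p q : α → ℝ)
    (hp0 : ∀ ω, 0 ≤ p ω)
    (hq0 : ∀ ω, 0 ≤ q ω) (hq1 : (∑ ω, q ω) = 1)
    (hsupp : ∀ ω, q ω = 0 → p ω = 0)
    (k : ℝ)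
    (hD : (∑ ω, p ω * logb 2 (p ω / q ω)) ≤ k)
    (δ : ℝ) (hδ0 : 0 < δ) :
    (∑ ω, if (2 : ℝ) ^ ((k + 1) / δ) < p ω / q ω then p ω else 0) ≤ δ := by
  set t := (k + 1) / δ
  have hlower (s : Finset α) : -1 < ∑ ω ∈ s, p ω * logb 2 (p ω / q ω) := by
    have hc : exp (-1) / log 2 < 1 := (div_lt_one (log_pos one_lt_two)).2 exp_neg_one_lt_log_two
    have hs : ∑ ω ∈ s, q ω ≤ 1 :=
      hq1 ▸ sum_le_sum_of_subset_of_nonneg (subset_univ s) fun ω _ _ => hq0 ω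
    exact (neg_lt_neg hc).trans_le <| neg_exp_neg_one_div_log_le_sum_mul_logb_div one_lt_two
      (fun ω _ => hp0 ω) (fun ω _ => hq0 ω) (fun ω _ => hsupp ω) hs
  have ht : 0 < t := div_pos (by linarith [hlower univ]) hδ0
  set S := univ.filter fun ω => 2 ^ t < p ω / q ω
  rw [← sum_filter]
  have htail := mul_sum_le_sum_mul_logb_of_rpow_lt (s := S) one_lt_two (fun ω _ => hp0 ω)
    fun ω hω => (mem_filter.1 hω).2
  have hsplit := sum_filter_add_sum_filter_not univ (fun ω => 2 ^ t < p ω / q ω)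
    fun ω => p ω * logb 2 (p ω / q ω)
  have hlt : t * ∑ ω ∈ S, p ω < t * δ := by
    calc _ < k + 1 := by linarith [hlower (univ.filter fun ω => ¬2 ^ t < p ω / q ω)]
      _ = t * δ := (div_mul_cancel₀ _ hδ0.ne').symm
  exact (lt_of_mul_lt_mul_left hlt ht.le).le

/-- substate-type argument used in Theorem 3.5: if `p, q` are
probability mass functions on a finite set with `supp(p) ⊆ supp(q)` and KL divergence
`D(p‖q) = Σ_ω p(ω) log₂(p(ω)/q(ω)) ≤ k` for some `k ≥ 0`, then for every `δ ∈ (0,1)`,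
`Pr_{ω∼p}[ p(ω)/q(ω) > 2^{(k+1)/δ} ] ≤ δ`. -/
theorem kl_divergence_markov_tail
    {α : Type*} [Fintype α] (p q : α → ℝ)
    (hp0 : ∀ ω, 0 ≤ p ω) (hp1 : (∑ ω, p ω) = 1)
    (hq0 : ∀ ω, 0 ≤ q ω) (hq1 : (∑ ω, q ω) = 1)
    (hsupp : ∀ ω, q ω = 0 → p ω = 0)
    (k : ℝ) (hk : 0 ≤ k)
    (hD : (∑ ω, p ω * logb 2 (p ω / q ω)) ≤ k)
    (δ : ℝ) (hδ0 : 0 < δ) (hδ1 : δ < 1) :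
    (∑ ω, if (2 : ℝ) ^ ((k + 1) / δ) < p ω / q ω then p ω else 0) ≤ δ :=
  kl_divergence_markov_tail_general p q hp0 hq0 hq1 hsupp k hD δ hδ0
end
end

section
/- Fix ε, δ ∈ (0,1) and let p_{XYZMN} over finite sets 𝒳×𝒴×𝒵×ℳ×𝒩 satisfy the Markov conditions M−X−(Y,Z,N) and N−Y−(X,Z,M). If there exists an (R₁, R₂, ε) two-senders-one-receiver message compression with side information at the receiver for p_{XYZMN}, then there exists an (R₁, R₂, ε+2δ) two-senders-one-receiver message compression with side information at the receiver for p_{XYZMN} whose shared-randomness sets S_A and S_B each have cardinality at most 24|ℳ||𝒩|/δ³. -/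
open Finset Real
open scoped Classical

noncomputable section

variable {𝒳 𝒴 𝒵 ℳ 𝒩 : Type*} [Fintype 𝒳] [Fintype 𝒴] [Fintype 𝒵] [Fintype ℳ] [Fintype 𝒩]

/-- An `(R₁, R₂, ε)` two-senders–one-receiver message compression scheme with side
information at the receiver, for the joint distribution `p` on `𝒳 × 𝒴 × 𝒵 × ℳ × 𝒩`:
shared randomness `qA` between Alice and Charlie and `qB` between Bob and Charlie
(mutually independent and independent of `(X,Y,Z)`), encoders `fA`, `fB` into message
sets of sizes at most `2^⌈R₁⌉` and `2^⌈R₂⌉`, and a decoder `g` whose output `(M',N')`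
satisfies `½‖p_{XYZM'N'} − p_{XYZMN}‖₁ ≤ ε`. -/
def IsTwoSenderScheme (p : 𝒳 → 𝒴 → 𝒵 → ℳ → 𝒩 → ℝ) (R₁ R₂ ε : ℝ) : Prop :=
  ∃ (kA kB cA cB : ℕ) (qA : Fin kA → ℝ) (qB : Fin kB → ℝ)
    (fA : 𝒳 → Fin kA → Fin cA) (fB : 𝒴 → Fin kB → Fin cB)
    (g : Fin cA → Fin cB → 𝒵 → Fin kA → Fin kB → ℳ × 𝒩),
    (∀ s, 0 ≤ qA s) ∧ (∑ s, qA s) = 1 ∧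
    (∀ s, 0 ≤ qB s) ∧ (∑ s, qB s) = 1 ∧
    ((cA : ℝ) ≤ (2 : ℝ) ^ (⌈R₁⌉ : ℤ)) ∧ ((cB : ℝ) ≤ (2 : ℝ) ^ (⌈R₂⌉ : ℤ)) ∧
    (1 / 2) * (∑ x, ∑ y, ∑ z, ∑ m, ∑ n,
      |(∑ sa, ∑ sb, qA sa * qB sb * margXYZ p x y z *
          (if g (fA x sa) (fB y sb) z sa sb = (m, n) then 1 else 0)) - p x y z m n|) ≤ ε

/-- A two-senders–one-receiver scheme as in `IsTwoSenderScheme`, with the additional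
requirement that the shared-randomness sets have cardinalities at most `bA` and `bB`. -/
def IsTwoSenderSchemeBounded (p : 𝒳 → 𝒴 → 𝒵 → ℳ → 𝒩 → ℝ) (R₁ R₂ ε bA bB : ℝ) : Prop :=
  ∃ (kA kB cA cB : ℕ) (qA : Fin kA → ℝ) (qB : Fin kB → ℝ)
    (fA : 𝒳 → Fin kA → Fin cA) (fB : 𝒴 → Fin kB → Fin cB)
    (g : Fin cA → Fin cB → 𝒵 → Fin kA → Fin kB → ℳ × 𝒩),
    (∀ s, 0 ≤ qA s) ∧ (∑ s, qA s) = 1 ∧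
    (∀ s, 0 ≤ qB s) ∧ (∑ s, qB s) = 1 ∧
    ((kA : ℝ) ≤ bA) ∧ ((kB : ℝ) ≤ bB) ∧
    ((cA : ℝ) ≤ (2 : ℝ) ^ (⌈R₁⌉ : ℤ)) ∧ ((cB : ℝ) ≤ (2 : ℝ) ^ (⌈R₂⌉ : ℤ)) ∧
    (1 / 2) * (∑ x, ∑ y, ∑ z, ∑ m, ∑ n,
      |(∑ sa, ∑ sb, qA sa * qB sb * margXYZ p x y z *
          (if g (fA x sa) (fB y sb) z sa sb = (m, n) then 1 else 0)) - p x y z m n|) ≤ ε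

/-!
Let Charlie replace Alice's seed distribution `q_A` by the uniform distribution on a sample
`σ_1, …, σ_t` drawn i.i.d. from `q_A`. For each `(x, y, z)` the law of `(M', N')` becomes the
empirical mean of `t` probability vectors on `ℳ × 𝒩`; each coordinate has variance at most
`1/t` times its second moment, so by Cauchy–Schwarz the expected `ℓ₁` deviation is at most
`√(|ℳ||𝒩|/t)`. Averaging over `(x, y, z)`, some sample moves the joint law by at most
`½√(|ℳ||𝒩|/t) ≤ δ` in total variation once `t = ⌈|ℳ||𝒩|/δ²⌉`. Doing the same for Bob's seeds
costs another `δ`, and `t ≤ 2|ℳ||𝒩|/δ² ≤ 24|ℳ||𝒩|/δ³`.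
-/

lemma sum_mul_abs_le_sqrt_sum_mul_sq {ι : Type*} [Fintype ι] {W v : ι → ℝ}
    (hW0 : ∀ i, 0 ≤ W i) (hW1 : ∑ i, W i = 1) :
    ∑ i, W i * |v i| ≤ √(∑ i, W i * v i ^ 2) := by
  have h := Real.sum_sqrt_mul_sqrt_le univ hW0 fun i => mul_nonneg (hW0 i) (sq_nonneg (v i))
  rw [hW1, sqrt_one, one_mul] at h
  refine le_of_eq_of_le (sum_congr rfl fun i _ => ?_) h
  rw [sqrt_mul (hW0 i), sqrt_sq_eq_abs, ← mul_assoc, mul_self_sqrt (hW0 i)]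

lemma sum_sqrt_le_sqrt_card_mul_sum {ι : Type*} [Fintype ι] {v : ι → ℝ} (hv : ∀ i, 0 ≤ v i) :
    ∑ i, √(v i) ≤ √(Fintype.card ι * ∑ i, v i) := by
  refine le_sqrt_of_sq_le ((sq_sum_le_card_mul_sum_sq (s := univ)).trans_eq ?_)
  simp [sq_sqrt (hv _)]

lemma exists_le_of_sum_mul_le {ι : Type*} [Fintype ι] {W f : ι → ℝ} {c : ℝ}
    (hW0 : ∀ i, 0 ≤ W i) (hW1 : ∑ i, W i = 1) (h : ∑ i, W i * f i ≤ c) : ∃ i, f i ≤ c := by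
  by_contra! hc
  obtain ⟨i, -, hi⟩ := exists_lt_of_sum_lt (s := univ) (f := 0) (g := W) (by simp [hW1])
  have hlt : ∑ i, W i * c < ∑ i, W i * f i :=
    sum_lt_sum (fun j _ => mul_le_mul_of_nonneg_left (hc j).le (hW0 j))
      ⟨i, mem_univ i, mul_lt_mul_of_pos_left (hc i) hi⟩
  rw [← sum_mul, hW1, one_mul] at hlt
  linarith

section Sampling

variable {S : Type*} [Fintype S] {t : ℕ}

def iidWeight (q : S → ℝ) (σ : Fin t → S) : ℝ := ∏ j, q (σ j)

def empiricalMean (σ : Fin t → S) (f : S → ℝ) : ℝ := ∑ i, (t : ℝ)⁻¹ * f (σ i)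

omit [Fintype S] in
lemma iidWeight_nonneg {q : S → ℝ} (hq : ∀ s, 0 ≤ q s) (σ : Fin t → S) : 0 ≤ iidWeight q σ :=
  prod_nonneg fun j _ => hq (σ j)

lemma sum_iidWeight_mul_prod (q : S → ℝ) (g : Fin t → S → ℝ) :
    ∑ σ : Fin t → S, iidWeight q σ * ∏ j, g j (σ j) = ∏ j, ∑ s, q s * g j s := by
  simp only [iidWeight, ← prod_mul_distrib]
  exact (Fintype.prod_sum fun j s => q s * g j s).symm

variable {q : S → ℝ}

lemma sum_iidWeight (hq : ∑ s, q s = 1) : ∑ σ : Fin t → S, iidWeight q σ = 1 := by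
  simpa [hq] using sum_iidWeight_mul_prod (t := t) q fun _ _ => 1

lemma sum_iidWeight_mul_apply (hq : ∑ s, q s = 1) (f : S → ℝ) (i : Fin t) :
    ∑ σ : Fin t → S, iidWeight q σ * f (σ i) = ∑ s, q s * f s := by
  have h := sum_iidWeight_mul_prod q fun j s => if j = i then f s else 1
  simp only [prod_ite_eq', mem_univ, if_true] at h
  rw [h, Fintype.prod_eq_single i fun j hj => by simp [hj, hq]]
  simp

lemma sum_iidWeight_mul_apply_mul_apply (hq : ∑ s, q s = 1) (f : S → ℝ) (i i' : Fin t) :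
    ∑ σ : Fin t → S, iidWeight q σ * (f (σ i) * f (σ i')) =
      if i = i' then ∑ s, q s * f s ^ 2 else (∑ s, q s * f s) ^ 2 := by
  split_ifs with hii'
  · subst hii'
    simp only [← sq]
    exact sum_iidWeight_mul_apply hq (fun s => f s ^ 2) i
  · have h := sum_iidWeight_mul_prod q fun j s => if j = i ∨ j = i' then f s else 1
    rw [Fintype.prod_eq_mul i i' hii' fun j hj => by simp [hj.1, hj.2, hq]] at h
    simp only [true_or, or_true, if_true] at h
    rw [sq, ← h]
    refine sum_congr rfl fun σ _ => ?_
    rw [Fintype.prod_eq_mul i i' hii' fun j hj => by simp [hj.1, hj.2]]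
    simp

lemma sum_iidWeight_mul_sq_empiricalMean_sub (ht : t ≠ 0) (hq : ∑ s, q s = 1) (f : S → ℝ) :
    ∑ σ : Fin t → S, iidWeight q σ * (empiricalMean σ f - ∑ s, q s * f s) ^ 2 =
      (∑ s, q s * (f s - ∑ s', q s' * f s') ^ 2) / t := by
  set μ := ∑ s, q s * f s
  -- Centring at the mean makes the cross terms `i ≠ i'` vanish.
  set g : S → ℝ := fun s => f s - μ
  have hg : ∑ s, q s * g s = 0 := by simp [g, μ, mul_sub, sum_sub_distrib, ← sum_mul, hq]
  have hcentre : ∀ σ : Fin t → S, empiricalMean σ f - μ = ∑ i, (t : ℝ)⁻¹ * g (σ i) := by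
    intro σ
    simp [empiricalMean, g, mul_sub, sum_sub_distrib, ht]
  calc ∑ σ : Fin t → S, iidWeight q σ * (empiricalMean σ f - μ) ^ 2
      = ∑ σ : Fin t → S, ∑ i, ∑ i',
          (t : ℝ)⁻¹ * (t : ℝ)⁻¹ * (iidWeight q σ * (g (σ i) * g (σ i'))) := by
        refine sum_congr rfl fun σ _ => ?_
        rw [hcentre, sq, sum_mul_sum, mul_sum]
        refine sum_congr rfl fun i _ => ?_
        rw [mul_sum]
        exact sum_congr rfl fun i' _ => by ring
    _ = ∑ i : Fin t, ∑ i' : Fin t,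
          (t : ℝ)⁻¹ * (t : ℝ)⁻¹ * (if i = i' then ∑ s, q s * g s ^ 2 else 0) := by
        rw [sum_comm]
        refine sum_congr rfl fun i _ => ?_
        rw [sum_comm]
        refine sum_congr rfl fun i' _ => ?_
        rw [← mul_sum, sum_iidWeight_mul_apply_mul_apply hq, hg]
        simp
    _ = (∑ s, q s * g s ^ 2) / t := by
        simp only [mul_ite, mul_zero, sum_ite_eq, mem_univ, if_true, sum_const, card_univ,
          Fintype.card_fin, nsmul_eq_mul]
        field_simp

lemma sum_mul_sub_sq_le (hq : ∑ s, q s = 1) (f : S → ℝ) :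
    ∑ s, q s * (f s - ∑ s', q s' * f s') ^ 2 ≤ ∑ s, q s * f s ^ 2 := by
  set μ := ∑ s, q s * f s
  have hexpand : ∀ s, q s * (f s - μ) ^ 2 = q s * f s ^ 2 - 2 * μ * (q s * f s) + μ ^ 2 * q s :=
    fun s => by ring
  simp only [hexpand, sum_add_distrib, sum_sub_distrib, ← mul_sum, hq]
  nlinarith [sq_nonneg μ]

lemma sum_iidWeight_mul_sum_abs_empiricalMean_sub_le {B : Type*} [Fintype B]
    (hq0 : ∀ s, 0 ≤ q s) (hq1 : ∑ s, q s = 1) (ht : t ≠ 0) {K : S → B → ℝ}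
    (hK0 : ∀ s b, 0 ≤ K s b) (hK1 : ∀ s, ∑ b, K s b ≤ 1) :
    ∑ σ : Fin t → S, iidWeight q σ * ∑ b, |empiricalMean σ (K · b) - ∑ s, q s * K s b| ≤
      √(Fintype.card B / t) := by
  have hdev : ∀ b, ∑ σ : Fin t → S, iidWeight q σ * |empiricalMean σ (K · b) - ∑ s, q s * K s b|
      ≤ √((∑ s, q s * K s b ^ 2) / t) := fun b =>
    (sum_mul_abs_le_sqrt_sum_mul_sq (iidWeight_nonneg hq0) (sum_iidWeight hq1)).trans <|
      sqrt_le_sqrt <| (sum_iidWeight_mul_sq_empiricalMean_sub ht hq1 _).trans_le <|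
        div_le_div_of_nonneg_right (sum_mul_sub_sq_le hq1 _) (Nat.cast_nonneg t)
  have hmass : ∑ b, ∑ s, q s * K s b ^ 2 ≤ 1 := by
    rw [sum_comm]
    calc ∑ s, ∑ b, q s * K s b ^ 2 ≤ ∑ s, q s := sum_le_sum fun s _ => by
          rw [← mul_sum]
          refine mul_le_of_le_one_right (hq0 s) ?_
          exact (sum_sq_le_sq_sum_of_nonneg fun b _ => hK0 s b).trans
            (pow_le_one₀ (sum_nonneg fun b _ => hK0 s b) (hK1 s))
      _ = 1 := hq1
  calc ∑ σ : Fin t → S, iidWeight q σ * ∑ b, |empiricalMean σ (K · b) - ∑ s, q s * K s b|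
      = ∑ b, ∑ σ : Fin t → S, iidWeight q σ * |empiricalMean σ (K · b) - ∑ s, q s * K s b| := by
        simp_rw [mul_sum]
        exact sum_comm
    _ ≤ ∑ b, √((∑ s, q s * K s b ^ 2) / t) := sum_le_sum fun b _ => hdev b
    _ ≤ √(Fintype.card B * ∑ b, (∑ s, q s * K s b ^ 2) / t) :=
        sum_sqrt_le_sqrt_card_mul_sum fun b =>
          div_nonneg (sum_nonneg fun s _ => mul_nonneg (hq0 s) (sq_nonneg _)) (Nat.cast_nonneg t)
    _ ≤ √(Fintype.card B / t) := by
        refine sqrt_le_sqrt ?_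
        rw [← sum_div, ← mul_div_assoc]
        gcongr
        exact mul_le_of_le_one_right (Nat.cast_nonneg _) hmass

theorem exists_sample_sum_mul_sum_abs_empiricalMean_sub_le {A B : Type*} [Fintype A]
    [Fintype B] (hq0 : ∀ s, 0 ≤ q s) (hq1 : ∑ s, q s = 1) {w : A → ℝ} (hw0 : ∀ a, 0 ≤ w a)
    (hw1 : ∑ a, w a = 1) {K : S → A → B → ℝ} (hK0 : ∀ s a b, 0 ≤ K s a b)
    (hK1 : ∀ s a, ∑ b, K s a b ≤ 1) (ht : t ≠ 0) :
    ∃ σ : Fin t → S,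
      ∑ a, w a * ∑ b, |empiricalMean σ (K · a b) - ∑ s, q s * K s a b| ≤
        √(Fintype.card B / t) := by
  refine exists_le_of_sum_mul_le (iidWeight_nonneg hq0) (sum_iidWeight hq1) ?_
  calc ∑ σ : Fin t → S, iidWeight q σ *
        ∑ a, w a * ∑ b, |empiricalMean σ (K · a b) - ∑ s, q s * K s a b|
      = ∑ a, w a * ∑ σ : Fin t → S, iidWeight q σ *
          ∑ b, |empiricalMean σ (K · a b) - ∑ s, q s * K s a b| := by
        simp_rw [mul_sum]
        rw [sum_comm]
        exact sum_congr rfl fun a _ => sum_congr rfl fun σ _ => sum_congr rfl fun b _ => by ring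
    _ ≤ ∑ a, w a * √(Fintype.card B / t) := sum_le_sum fun a _ =>
        mul_le_mul_of_nonneg_left
          (sum_iidWeight_mul_sum_abs_empiricalMean_sub_le hq0 hq1 ht (hK0 · a) (hK1 · a)) (hw0 a)
    _ = √(Fintype.card B / t) := by rw [← sum_mul, hw1, one_mul]

end Sampling

lemma natCeil_div_sq_le {M δ : ℝ} (hM : 1 ≤ M) (hδ0 : 0 < δ) (hδ1 : δ ≤ 1) :
    (⌈M / δ ^ 2⌉₊ : ℝ) ≤ 2 * M / δ ^ 2 := by
  have hδ2 : 0 < δ ^ 2 := by positivity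
  have h1 : 1 ≤ M / δ ^ 2 := by
    rw [le_div_iff₀ hδ2]
    nlinarith [pow_le_one₀ hδ0.le hδ1 (n := 2)]
  calc (⌈M / δ ^ 2⌉₊ : ℝ) ≤ M / δ ^ 2 + 1 := (Nat.ceil_lt_add_one (by linarith)).le
    _ ≤ 2 * M / δ ^ 2 := by rw [two_mul, add_div]; linarith

lemma sqrt_div_natCeil_div_sq_le {M δ : ℝ} (hM : 0 < M) (hδ : 0 < δ) :
    √(M / ⌈M / δ ^ 2⌉₊) ≤ δ := by
  have hδ2 : 0 < δ ^ 2 := by positivity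
  have hceil : M / δ ^ 2 ≤ ⌈M / δ ^ 2⌉₊ := Nat.le_ceil _
  have ht : (0 : ℝ) < ⌈M / δ ^ 2⌉₊ := (div_pos hM hδ2).trans_le hceil
  calc √(M / ⌈M / δ ^ 2⌉₊) ≤ √(δ ^ 2) := by
        refine sqrt_le_sqrt ?_
        rw [div_le_iff₀ ht]
        rwa [div_le_iff₀ hδ2, mul_comm] at hceil
    _ = δ := sqrt_sq hδ.le

section Scheme

variable {p : 𝒳 → 𝒴 → 𝒵 → ℳ → 𝒩 → ℝ} {SA SB : Type*} [Fintype SA] [Fintype SB]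
  {qA : SA → ℝ} {qB : SB → ℝ}

lemma IsDist.margXYZ_nonneg (hp : IsDist p) (x : 𝒳) (y : 𝒴) (z : 𝒵) : 0 ≤ margXYZ p x y z :=
  sum_nonneg fun m _ => sum_nonneg fun n _ => hp.1 x y z m n

lemma IsDist.sum_margXYZ (hp : IsDist p) : ∑ x, ∑ y, ∑ z, margXYZ p x y z = 1 := hp.2

lemma IsDist.one_le_card_mul_card (hp : IsDist p) :
    1 ≤ (Fintype.card ℳ : ℝ) * Fintype.card 𝒩 := by
  rcases isEmpty_or_nonempty ℳ with hℳ | hℳ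
  · simpa using hp.2
  rcases isEmpty_or_nonempty 𝒩 with h𝒩 | h𝒩
  · simpa using hp.2
  exact_mod_cast Nat.one_le_iff_ne_zero.mpr (mul_ne_zero Fintype.card_ne_zero Fintype.card_ne_zero)

/-- The law of `(X, Y, Z, M', N')` for seeds drawn from `qA` and `qB`; `D sa sb x y z` stands for
the decoder applied to the encoders' messages, `g (fA x sa) (fB y sb) z sa sb`. -/
def outputLaw (p : 𝒳 → 𝒴 → 𝒵 → ℳ → 𝒩 → ℝ)
    (qA : SA → ℝ) (qB : SB → ℝ) (D : SA → SB → 𝒳 → 𝒴 → 𝒵 → ℳ × 𝒩)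
    (x : 𝒳) (y : 𝒴) (z : 𝒵) (m : ℳ) (n : 𝒩) : ℝ :=
  ∑ sa, ∑ sb, qA sa * qB sb * margXYZ p x y z * (if D sa sb x y z = (m, n) then 1 else 0)

def tvDist (P Q : 𝒳 → 𝒴 → 𝒵 → ℳ → 𝒩 → ℝ) : ℝ :=
  (1 / 2) * ∑ x, ∑ y, ∑ z, ∑ m, ∑ n, |P x y z m n - Q x y z m n|

lemma tvDist_triangle (P Q R : 𝒳 → 𝒴 → 𝒵 → ℳ → 𝒩 → ℝ) :
    tvDist P R ≤ tvDist P Q + tvDist Q R := by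
  simp only [tvDist, ← mul_add, ← sum_add_distrib]
  gcongr
  exact abs_sub_le _ _ _

omit [Fintype 𝒳] [Fintype 𝒴] [Fintype 𝒵] in
lemma outputLaw_comm (p : 𝒳 → 𝒴 → 𝒵 → ℳ → 𝒩 → ℝ) (qA : SA → ℝ) (qB : SB → ℝ)
    (D : SA → SB → 𝒳 → 𝒴 → 𝒵 → ℳ × 𝒩) :
    outputLaw p qA qB D = outputLaw p qB qA fun sb sa => D sa sb := by
  ext x y z m n
  rw [outputLaw, sum_comm]
  simp only [outputLaw, mul_comm (qA _)]

omit [Fintype 𝒳] [Fintype 𝒴] [Fintype 𝒵] in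
lemma outputLaw_eq_mul_sum (D : SA → SB → 𝒳 → 𝒴 → 𝒵 → ℳ × 𝒩) (x : 𝒳) (y : 𝒴) (z : 𝒵)
    (m : ℳ) (n : 𝒩) :
    outputLaw p qA qB D x y z m n = margXYZ p x y z *
      ∑ sa, qA sa * ∑ sb, qB sb * (if D sa sb x y z = (m, n) then 1 else 0) := by
  simp only [outputLaw, mul_sum]
  exact sum_congr rfl fun sa _ => sum_congr rfl fun sb _ => by ring

theorem exists_tvDist_outputLaw_resample_left_le (hp : IsDist p) (hqA0 : ∀ s, 0 ≤ qA s)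
    (hqA1 : ∑ s, qA s = 1) (hqB0 : ∀ s, 0 ≤ qB s) (hqB1 : ∑ s, qB s = 1)
    (D : SA → SB → 𝒳 → 𝒴 → 𝒵 → ℳ × 𝒩) {t : ℕ} (ht : t ≠ 0) :
    ∃ σ : Fin t → SA,
      tvDist (outputLaw p (fun _ => (t : ℝ)⁻¹) qB fun i => D (σ i)) (outputLaw p qA qB D) ≤
        √(Fintype.card ℳ * Fintype.card 𝒩 / t) / 2 := by
  -- `K sa (x, y, z)` is the law of `(M', N')` given `(x, y, z)` and Alice's seed `sa`.
  set K : SA → 𝒳 × 𝒴 × 𝒵 → ℳ × 𝒩 → ℝ := fun sa a b =>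
    ∑ sb, qB sb * (if D sa sb a.1 a.2.1 a.2.2 = b then 1 else 0)
  have hK0 : ∀ sa a b, 0 ≤ K sa a b := fun sa a b =>
    sum_nonneg fun sb _ => mul_nonneg (hqB0 sb) (by positivity)
  have hK1 : ∀ sa a, ∑ b, K sa a b ≤ 1 := fun sa a => by
    simp [K, sum_comm (γ := ℳ × 𝒩), hqB1]
  obtain ⟨σ, hσ⟩ := exists_sample_sum_mul_sum_abs_empiricalMean_sub_le hqA0 hqA1
    (w := fun a => margXYZ p a.1 a.2.1 a.2.2) (fun a => hp.margXYZ_nonneg _ _ _)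
    (by simpa only [Fintype.sum_prod_type] using hp.sum_margXYZ) hK0 hK1 ht
  refine ⟨σ, ?_⟩
  have hpoint : ∀ x y z m n,
      |outputLaw p (fun _ => (t : ℝ)⁻¹) qB (fun i => D (σ i)) x y z m n -
          outputLaw p qA qB D x y z m n| =
        margXYZ p x y z *
          |empiricalMean σ (K · (x, y, z) (m, n)) - ∑ s, qA s * K s (x, y, z) (m, n)| := by
    intro x y z m n
    rw [outputLaw_eq_mul_sum, outputLaw_eq_mul_sum, ← mul_sub, abs_mul,
      abs_of_nonneg (hp.margXYZ_nonneg x y z)]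
    rfl
  calc tvDist (outputLaw p (fun _ => (t : ℝ)⁻¹) qB fun i => D (σ i)) (outputLaw p qA qB D)
      = (1 / 2) * ∑ a : 𝒳 × 𝒴 × 𝒵, margXYZ p a.1 a.2.1 a.2.2 *
          ∑ b : ℳ × 𝒩, |empiricalMean σ (K · a b) - ∑ s, qA s * K s a b| := by
        simp only [tvDist, hpoint, Fintype.sum_prod_type, mul_sum]
    _ ≤ (1 / 2) * √(Fintype.card (ℳ × 𝒩) / t) := by gcongr
    _ = √(Fintype.card ℳ * Fintype.card 𝒩 / t) / 2 := by
        rw [Fintype.card_prod, Nat.cast_mul]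
        ring

theorem exists_tvDist_outputLaw_resample_right_le (hp : IsDist p) (hqA0 : ∀ s, 0 ≤ qA s)
    (hqA1 : ∑ s, qA s = 1) (hqB0 : ∀ s, 0 ≤ qB s) (hqB1 : ∑ s, qB s = 1)
    (D : SA → SB → 𝒳 → 𝒴 → 𝒵 → ℳ × 𝒩) {t : ℕ} (ht : t ≠ 0) :
    ∃ σ : Fin t → SB,
      tvDist (outputLaw p qA (fun _ => (t : ℝ)⁻¹) fun sa j => D sa (σ j)) (outputLaw p qA qB D) ≤
        √(Fintype.card ℳ * Fintype.card 𝒩 / t) / 2 := by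
  obtain ⟨σ, hσ⟩ :=
    exists_tvDist_outputLaw_resample_left_le hp hqB0 hqB1 hqA0 hqA1 (fun sb sa => D sa sb) ht
  refine ⟨σ, ?_⟩
  rwa [outputLaw_comm p qA, outputLaw_comm p qA]

end Scheme

theorem shared_randomness_reduction_general
    (p : 𝒳 → 𝒴 → 𝒵 → ℳ → 𝒩 → ℝ) (hdist : IsDist p)
    (ε δ : ℝ) (hδ : δ ∈ Set.Ioo (0:ℝ) 1)
    (R₁ R₂ : ℝ) (hscheme : IsTwoSenderScheme p R₁ R₂ ε) :
    IsTwoSenderSchemeBounded p R₁ R₂ (ε + 2 * δ)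
      (24 * (Fintype.card ℳ : ℝ) * (Fintype.card 𝒩 : ℝ) / δ ^ 3)
      (24 * (Fintype.card ℳ : ℝ) * (Fintype.card 𝒩 : ℝ) / δ ^ 3) := by
  obtain ⟨kA, kB, cA, cB, qA, qB, fA, fB, g, hqA0, hqA1, hqB0, hqB1, hcA, hcB, herr⟩ := hscheme
  obtain ⟨hδ0, hδ1⟩ := hδ
  set M : ℝ := Fintype.card ℳ * Fintype.card 𝒩
  have hM : 1 ≤ M := hdist.one_le_card_mul_card
  set t := ⌈M / δ ^ 2⌉₊
  have ht : t ≠ 0 := (Nat.ceil_pos.mpr (by positivity)).ne'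
  have htM : (t : ℝ) ≤ 24 * (Fintype.card ℳ : ℝ) * (Fintype.card 𝒩 : ℝ) / δ ^ 3 := by
    refine (natCeil_div_sq_le hM hδ0 hδ1.le).trans ?_
    rw [mul_assoc 24]
    gcongr ?_ / ?_
    · linarith
    · exact pow_le_pow_of_le_one hδ0.le hδ1.le (by norm_num)
  have htδ : √(M / t) / 2 ≤ δ := by
    linarith [sqrt_div_natCeil_div_sq_le (by linarith : 0 < M) hδ0]
  have hu0 : ∀ i : Fin t, 0 ≤ (t : ℝ)⁻¹ := fun _ => by positivity
  have hu1 : ∑ i : Fin t, (t : ℝ)⁻¹ = 1 := by simp [ht]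
  obtain ⟨σA, hA⟩ := exists_tvDist_outputLaw_resample_left_le hdist hqA0 hqA1 hqB0 hqB1
    (fun sa sb x y z => g (fA x sa) (fB y sb) z sa sb) ht
  obtain ⟨σB, hB⟩ := exists_tvDist_outputLaw_resample_right_le hdist hu0 hu1 hqB0 hqB1
    (fun i sb x y z => g (fA x (σA i)) (fB y sb) z (σA i) sb) ht
  refine ⟨t, t, cA, cB, fun _ => (t : ℝ)⁻¹, fun _ => (t : ℝ)⁻¹, fun x i => fA x (σA i),
    fun y j => fB y (σB j), fun c d z i j => g c d z (σA i) (σB j),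
    hu0, hu1, hu0, hu1, htM, htM, hcA, hcB, ?_⟩
  have herr' : tvDist (outputLaw p qA qB fun sa sb x y z => g (fA x sa) (fB y sb) z sa sb) p ≤ ε :=
    herr
  calc _ ≤ _ := (tvDist_triangle _ _ p).trans
        (add_le_add hB ((tvDist_triangle _ _ p).trans (add_le_add hA herr')))
    _ ≤ ε + 2 * δ := by linarith

/-- Claim 4.4, shared randomness reduction: any `(R₁, R₂, ε)`
two-senders–one-receiver message compression scheme with side information at the
receiver can be converted into an `(R₁, R₂, ε+2δ)` scheme whose shared-randomness sets
each have cardinality at most `24|ℳ||𝒩|/δ³`. -/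
theorem shared_randomness_reduction
    (p : 𝒳 → 𝒴 → 𝒵 → ℳ → 𝒩 → ℝ) (hdist : IsDist p) (hMarkov : MarkovCond p)
    (ε δ : ℝ) (hε : ε ∈ Set.Ioo (0:ℝ) 1) (hδ : δ ∈ Set.Ioo (0:ℝ) 1)
    (R₁ R₂ : ℝ) (hscheme : IsTwoSenderScheme p R₁ R₂ ε) :
    IsTwoSenderSchemeBounded p R₁ R₂ (ε + 2 * δ)
      (24 * (Fintype.card ℳ : ℝ) * (Fintype.card 𝒩 : ℝ) / δ ^ 3)
      (24 * (Fintype.card ℳ : ℝ) * (Fintype.card 𝒩 : ℝ) / δ ^ 3) :=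
  shared_randomness_reduction_general p hdist ε δ hδ R₁ R₂ hscheme

end
end

section
/- Let ε, δ ∈ (0,1) with 1/√δ an integer, let p_{XY} be a joint distribution over finite sets 𝒳×𝒴, and let R₁, R₂ satisfy Pr_{(x,y)~p}[ 1/p_{X|Y=y}(x) ≤ δ·2^{R₁} and 1/p_{Y|X=x}(y) ≤ δ·2^{R₂} and 1/p_{XY}(x,y) ≤ δ⁴·2^{R₁+R₂−log log(max(|𝒳|,|𝒴|)/δ)} ] ≥ 1−ε. Then there exist deterministic encoders f_A : 𝒳 → C_A and f_B : 𝒴 → C_B with |C_A| ≤ 2^{⌈R₁+3 log(1/δ)⌉} and |C_B| ≤ 2^{⌈R₂+3 log(1/δ)⌉}, and a decoder g : C_A×C_B → 𝒳×𝒴, using no shared randomness, such that Pr_{(x,y)~p}[ g(f_A(x), f_B(y)) ≠ (x,y) ] ≤ ε+8δ. -/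
/-!
Random binning. Let `S` be the set of pairs meeting the three spectral thresholds; it carries
mass at least `1 - ε`. Every point of `S` carries at least a `1/(δ 2^{R₂})` share of its row
marginal, a `1/(δ 2^{R₁})` share of its column marginal and `1/(δ⁴ 2^{R₁+R₂-L})` of the total
mass, so rows, columns and `S` itself have at most that many points. Hash `x` and `y` by
independent uniform maps into `c_A ≥ 2^{R₁}/δ³` and `c_B ≥ 2^{R₂}/δ³` bins and decode a pair of
bins to any point of `S` inside them. A point of `S` is missed only if another point of `S`
shares both bins, and by a union bound the expected number of such points is at most
`δ 2^{R₂}/c_B + δ 2^{R₁}/c_A + |S|/(c_A c_B) ≤ 3δ`. Some deterministic pair of hash maps is at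
least as good as the average. Since `1/√δ` is an integer, `δ ≤ 1/4`, which makes the correction
`L = log log (max(|𝒳|,|𝒴|)/δ)` nonnegative.
-/

open Finset Real
open scoped Classical

noncomputable section

variable {𝒳 𝒴 : Type*} [Fintype 𝒳] [Fintype 𝒴]

/-- Marginal on `X` of a joint distribution on `𝒳 × 𝒴`. -/
def margX2 (p : 𝒳 → 𝒴 → ℝ) (x : 𝒳) : ℝ := ∑ y, p x y

/-- Marginal on `Y`. -/
def margY2 (p : 𝒳 → 𝒴 → ℝ) (y : 𝒴) : ℝ := ∑ x, p x y

/-- Conditional `p_{X|Y=y}(x)`. -/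
def condXY2 (p : 𝒳 → 𝒴 → ℝ) (x : 𝒳) (y : 𝒴) : ℝ := p x y / margY2 p y

/-- Conditional `p_{Y|X=x}(y)`. -/
def condYX2 (p : 𝒳 → 𝒴 → ℝ) (y : 𝒴) (x : 𝒳) : ℝ := p x y / margX2 p x

open scoped BigOperators

theorem Fintype.expect_ite_apply_eq_apply {α γ : Type*} [Fintype α] [Fintype γ] [Nonempty γ]
    {a b : α} (hab : a ≠ b) :
    𝔼 f : α → γ, (if f a = f b then (1 : ℝ) else 0) = (Fintype.card γ : ℝ)⁻¹ := by
  let restrict : {f : α → γ // f a = f b} ≃ ({j // j ≠ a} → γ) :=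
    { toFun := fun f j => f.1 j
      invFun := fun g => ⟨fun j => if h : j = a then g ⟨b, hab.symm⟩ else g ⟨j, h⟩,
        by simp [hab.symm]⟩
      left_inv := fun f => by
        ext j
        by_cases h : j = a
        · subst h; simp [f.2]
        · simp [h]
      right_inv := fun g => by
        ext j
        simp [j.2] }
  have hcard : Fintype.card (α → γ) = Fintype.card γ * Fintype.card ({j // j ≠ a} → γ) := by
    rw [Fintype.card_congr (Equiv.piSplitAt a fun _ => γ), Fintype.card_prod]
  have hpos : (0 : ℝ) < Fintype.card ({j // j ≠ a} → γ) := by exact_mod_cast Fintype.card_pos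
  rw [Fintype.expect_eq_sum_div_card, Finset.sum_boole, ← Fintype.card_subtype,
    Fintype.card_congr restrict, hcard]
  push_cast
  field_simp

theorem Fintype.expect_ite_apply_eq_apply_eq {α γ : Type*} [Fintype α] [Fintype γ] [Nonempty γ]
    (a b : α) :
    𝔼 f : α → γ, (if f a = f b then (1 : ℝ) else 0) =
      if a = b then 1 else (Fintype.card γ : ℝ)⁻¹ := by
  split_ifs with hab
  · simp [hab]
  · exact Fintype.expect_ite_apply_eq_apply hab

section Binning

variable {α β γ η : Type*}

def binDecoder (G : Finset (α × β)) (z₀ : α × β) (fA : α → γ) (fB : β → η) (c : γ) (d : η) :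
    α × β :=
  if h : ∃ z ∈ G, fA z.1 = c ∧ fB z.2 = d then h.choose else z₀

variable {G : Finset (α × β)} {z₀ z : α × β} {fA : α → γ} {fB : β → η}

theorem binDecoder_eq_of_unique (hz : z ∈ G)
    (huniq : ∀ z' ∈ G, fA z'.1 = fA z.1 → fB z'.2 = fB z.2 → z' = z) :
    binDecoder G z₀ fA fB (fA z.1) (fB z.2) = z := by
  have hex : ∃ z' ∈ G, fA z'.1 = fA z.1 ∧ fB z'.2 = fB z.2 := ⟨z, hz, rfl, rfl⟩
  obtain ⟨hmem, h₁, h₂⟩ := hex.choose_spec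
  rw [binDecoder, dif_pos hex]
  exact huniq _ hmem h₁ h₂

theorem ite_binDecoder_ne_le_sum_collision (hz : z ∈ G) :
    (if binDecoder G z₀ fA fB (fA z.1) (fB z.2) ≠ z then (1 : ℝ) else 0) ≤
      ∑ z' ∈ G.erase z,
        (if fA z'.1 = fA z.1 then 1 else 0) * (if fB z'.2 = fB z.2 then 1 else 0) := by
  have hnonneg : 0 ≤ ∑ z' ∈ G.erase z,
      (if fA z'.1 = fA z.1 then (1 : ℝ) else 0) * (if fB z'.2 = fB z.2 then 1 else 0) :=
    sum_nonneg fun _ _ => by positivity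
  by_cases huniq : ∀ z' ∈ G, fA z'.1 = fA z.1 → fB z'.2 = fB z.2 → z' = z
  · simpa [binDecoder_eq_of_unique hz huniq] using hnonneg
  push Not at huniq
  obtain ⟨z', hz', h₁, h₂, hne⟩ := huniq
  calc (if binDecoder G z₀ fA fB (fA z.1) (fB z.2) ≠ z then (1 : ℝ) else 0)
      ≤ 1 := by split_ifs <;> norm_num
    _ = (if fA z'.1 = fA z.1 then 1 else 0) * (if fB z'.2 = fB z.2 then 1 else 0) := by
      simp [h₁, h₂]
    _ ≤ _ := single_le_sum (f := fun z' => (if fA z'.1 = fA z.1 then (1 : ℝ) else 0) *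
        (if fB z'.2 = fB z.2 then 1 else 0)) (fun _ _ => by positivity) (mem_erase.2 ⟨hne, hz'⟩)

theorem sum_ite_binDecoder_ne_le [Fintype α] [Fintype β] {w : α × β → ℝ} (hw : ∀ z, 0 ≤ w z) :
    ∑ z, (if binDecoder G z₀ fA fB (fA z.1) (fB z.2) ≠ z then w z else 0) ≤
      ∑ z ∈ Gᶜ, w z + ∑ z ∈ G, w z * ∑ z' ∈ G.erase z,
        (if fA z'.1 = fA z.1 then 1 else 0) * (if fB z'.2 = fB z.2 then 1 else 0) := by
  rw [← sum_compl_add_sum G]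
  gcongr with z _ z hz
  · split_ifs <;> simp [hw]
  · simpa [ite_zero_mul_ite_zero] using mul_le_mul_of_nonneg_left
      (ite_binDecoder_ne_le_sum_collision (z₀ := z₀) (fA := fA) (fB := fB) hz) (hw z)

theorem expect_mul_expect_collision_le [Fintype α] [Fintype β] [Fintype γ] [Fintype η]
    [Nonempty γ] [Nonempty η] {z' : α × β} (hne : z' ≠ z) :
    (𝔼 fA : α → γ, if fA z'.1 = fA z.1 then (1 : ℝ) else 0) *
        (𝔼 fB : β → η, if fB z'.2 = fB z.2 then (1 : ℝ) else 0) ≤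
      (if z'.1 = z.1 then (Fintype.card η : ℝ)⁻¹ else 0) +
        (if z'.2 = z.2 then (Fintype.card γ : ℝ)⁻¹ else 0) +
        (Fintype.card γ : ℝ)⁻¹ * (Fintype.card η : ℝ)⁻¹ := by
  rw [Fintype.expect_ite_apply_eq_apply_eq, Fintype.expect_ite_apply_eq_apply_eq]
  by_cases h₁ : z'.1 = z.1 <;> by_cases h₂ : z'.2 = z.2
  · exact absurd (Prod.ext h₁ h₂) hne
  all_goals simp [h₁, h₂]
  all_goals positivity

theorem expect_sum_collision_le [Fintype α] [Fintype β] [Fintype γ] [Fintype η]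
    [Nonempty γ] [Nonempty η] {a b c : ℝ}
    (hrow : ∀ x, (#{z ∈ G | z.1 = x} : ℝ) ≤ a) (hcol : ∀ y, (#{z ∈ G | z.2 = y} : ℝ) ≤ b)
    (hcard : (#G : ℝ) ≤ c) (z : α × β) :
    𝔼 fA : α → γ, 𝔼 fB : β → η, ∑ z' ∈ G.erase z,
        (if fA z'.1 = fA z.1 then (1 : ℝ) else 0) * (if fB z'.2 = fB z.2 then 1 else 0) ≤
      a / Fintype.card η + b / Fintype.card γ + c / (Fintype.card γ * Fintype.card η) := by
  have hrow' : (#{z' ∈ G.erase z | z'.1 = z.1} : ℝ) ≤ a :=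
    le_trans (by gcongr; exact erase_subset z G) (hrow z.1)
  have hcol' : (#{z' ∈ G.erase z | z'.2 = z.2} : ℝ) ≤ b :=
    le_trans (by gcongr; exact erase_subset z G) (hcol z.2)
  have hcard' : (#(G.erase z) : ℝ) ≤ c := le_trans (by gcongr; exact erase_subset z G) hcard
  calc 𝔼 fA : α → γ, 𝔼 fB : β → η, ∑ z' ∈ G.erase z,
        (if fA z'.1 = fA z.1 then (1 : ℝ) else 0) * (if fB z'.2 = fB z.2 then 1 else 0)
      = ∑ z' ∈ G.erase z, (𝔼 fA : α → γ, if fA z'.1 = fA z.1 then (1 : ℝ) else 0) *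
          (𝔼 fB : β → η, if fB z'.2 = fB z.2 then (1 : ℝ) else 0) := by
        simp only [expect_sum_comm, Fintype.expect_mul_expect]
    _ ≤ ∑ z' ∈ G.erase z, ((if z'.1 = z.1 then (Fintype.card η : ℝ)⁻¹ else 0) +
          (if z'.2 = z.2 then (Fintype.card γ : ℝ)⁻¹ else 0) +
          (Fintype.card γ : ℝ)⁻¹ * (Fintype.card η : ℝ)⁻¹) :=
        sum_le_sum fun z' hz' => expect_mul_expect_collision_le (ne_of_mem_erase hz')
    _ = #{z' ∈ G.erase z | z'.1 = z.1} / Fintype.card η +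
          #{z' ∈ G.erase z | z'.2 = z.2} / Fintype.card γ +
          #(G.erase z) / (Fintype.card γ * Fintype.card η) := by
        simp only [sum_add_distrib, sum_ite, sum_const_zero, add_zero, sum_const, nsmul_eq_mul]
        ring
    _ ≤ a / Fintype.card η + b / Fintype.card γ + c / (Fintype.card γ * Fintype.card η) := by
        gcongr

theorem exists_binDecoder_error_le [Fintype α] [Fintype β] [Fintype γ] [Fintype η]
    [Nonempty γ] [Nonempty η] {w : α × β → ℝ} (hw : ∀ z, 0 ≤ w z) {a b c : ℝ}
    (hrow : ∀ x, (#{z ∈ G | z.1 = x} : ℝ) ≤ a) (hcol : ∀ y, (#{z ∈ G | z.2 = y} : ℝ) ≤ b)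
    (hcard : (#G : ℝ) ≤ c) (z₀ : α × β) :
    ∃ (fA : α → γ) (fB : β → η),
      ∑ z, (if binDecoder G z₀ fA fB (fA z.1) (fB z.2) ≠ z then w z else 0) ≤
        ∑ z ∈ Gᶜ, w z + (∑ z ∈ G, w z) *
          (a / Fintype.card η + b / Fintype.card γ + c / (Fintype.card γ * Fintype.card η)) := by
  set bound := a / Fintype.card η + b / Fintype.card γ + c / (Fintype.card γ * Fintype.card η)
  have hexpect : 𝔼 fA : α → γ, 𝔼 fB : β → η,
      ∑ z, (if binDecoder G z₀ fA fB (fA z.1) (fB z.2) ≠ z then w z else 0) ≤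
        ∑ z ∈ Gᶜ, w z + (∑ z ∈ G, w z) * bound :=
    calc _ ≤ 𝔼 fA : α → γ, 𝔼 fB : β → η, (∑ z ∈ Gᶜ, w z + ∑ z ∈ G, w z * ∑ z' ∈ G.erase z,
          (if fA z'.1 = fA z.1 then 1 else 0) * (if fB z'.2 = fB z.2 then 1 else 0)) := by
          gcongr with fA _ fB _
          exact sum_ite_binDecoder_ne_le hw
      _ = ∑ z ∈ Gᶜ, w z + ∑ z ∈ G, w z * 𝔼 fA : α → γ, 𝔼 fB : β → η, ∑ z' ∈ G.erase z,
          (if fA z'.1 = fA z.1 then 1 else 0) * (if fB z'.2 = fB z.2 then 1 else 0) := by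
          simp only [expect_add_distrib, expect_sum_comm, ← mul_expect, Fintype.expect_const]
      _ ≤ ∑ z ∈ Gᶜ, w z + ∑ z ∈ G, w z * bound := by
          gcongr with z
          · exact hw z
          · exact expect_sum_collision_le hrow hcol hcard z
      _ = ∑ z ∈ Gᶜ, w z + (∑ z ∈ G, w z) * bound := by rw [sum_mul]
  obtain ⟨fA, -, hfA⟩ := exists_le_of_expect_le univ_nonempty hexpect
  obtain ⟨fB, -, hfB⟩ := exists_le_of_expect_le univ_nonempty hfA
  exact ⟨fA, fB, hfB⟩

end Binning

theorem Finset.card_le_of_le_mul_weight {ι : Type*} {S : Finset ι} {w : ι → ℝ} {m t : ℝ}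
    (ht : 0 ≤ t) (hw : ∀ i ∈ S, 0 < w i) (hm : ∀ i ∈ S, m ≤ t * w i)
    (hsum : ∑ i ∈ S, w i ≤ m) : (#S : ℝ) ≤ t := by
  rcases S.eq_empty_or_nonempty with rfl | hS
  · simpa using ht
  have hm0 : 0 < m := (sum_pos hw hS).trans_le hsum
  have : #S * m ≤ t * m :=
    calc #S * m = ∑ _i ∈ S, m := by rw [sum_const, nsmul_eq_mul]
      _ ≤ ∑ i ∈ S, t * w i := sum_le_sum hm
      _ = t * ∑ i ∈ S, w i := (mul_sum ..).symm
      _ ≤ t * m := by gcongr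
  exact le_of_mul_le_mul_right this hm0

theorem sum_filter_fst_le_margX2 {α β : Type*} [Fintype β] {p : α → β → ℝ}
    (hp0 : ∀ x y, 0 ≤ p x y) (S : Finset (α × β)) (x : α) :
    ∑ z ∈ S with z.1 = x, p z.1 z.2 ≤ margX2 p x := by
  calc ∑ z ∈ S with z.1 = x, p z.1 z.2 ≤ ∑ z ∈ {x} ×ˢ univ, p z.1 z.2 :=
        sum_le_sum_of_subset_of_nonneg
          (fun _ hz => mem_product.2 ⟨mem_singleton.2 (mem_filter.1 hz).2, mem_univ _⟩)
          fun z _ _ => hp0 z.1 z.2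
    _ = margX2 p x := by rw [sum_product, sum_singleton, margX2]

theorem sum_filter_snd_le_margY2 {α β : Type*} [Fintype α] {p : α → β → ℝ}
    (hp0 : ∀ x y, 0 ≤ p x y) (S : Finset (α × β)) (y : β) :
    ∑ z ∈ S with z.2 = y, p z.1 z.2 ≤ margY2 p y := by
  calc ∑ z ∈ S with z.2 = y, p z.1 z.2 ≤ ∑ z ∈ univ ×ˢ {y}, p z.1 z.2 :=
        sum_le_sum_of_subset_of_nonneg
          (fun _ hz => mem_product.2 ⟨mem_univ _, mem_singleton.2 (mem_filter.1 hz).2⟩)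
          fun z _ _ => hp0 z.1 z.2
    _ = margY2 p y := by rw [sum_product_right, sum_singleton, margY2]

theorem sum_le_one {α β : Type*} [Fintype α] [Fintype β] {p : α → β → ℝ}
    (hp0 : ∀ x y, 0 ≤ p x y) (hp1 : ∑ x, ∑ y, p x y = 1) (S : Finset (α × β)) :
    ∑ z ∈ S, p z.1 z.2 ≤ 1 :=
  hp1 ▸ Fintype.sum_prod_type' p ▸ sum_le_univ_sum_of_nonneg fun z => hp0 z.1 z.2

theorem sum_compl_le {α β : Type*} [Fintype α] [Fintype β] {p : α → β → ℝ}
    (hp1 : ∑ x, ∑ y, p x y = 1) {S : Finset (α × β)} {ε : ℝ}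
    (hS : 1 - ε ≤ ∑ z ∈ S, p z.1 z.2) : ∑ z ∈ Sᶜ, p z.1 z.2 ≤ ε := by
  linarith [sum_compl_add_sum S fun z => p z.1 z.2, Fintype.sum_prod_type' p]

section SpectralSet

variable (p : 𝒳 → 𝒴 → ℝ)

-- Pairs with `p = 0` are excluded: there `1 / p = 0`, so the thresholds would hold vacuously.
def spectralSet (s t u : ℝ) : Finset (𝒳 × 𝒴) :=
  {z | 0 < p z.1 z.2 ∧ 1 / condXY2 p z.1 z.2 ≤ s ∧ 1 / condYX2 p z.2 z.1 ≤ t ∧ 1 / p z.1 z.2 ≤ u}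

variable {p} {s t u : ℝ} {z : 𝒳 × 𝒴}

theorem sum_ite_spectral_eq_sum_spectralSet (hp0 : ∀ x y, 0 ≤ p x y) :
    ∑ x, ∑ y, (if 1 / condXY2 p x y ≤ s ∧ 1 / condYX2 p y x ≤ t ∧ 1 / p x y ≤ u
      then p x y else 0) = ∑ z ∈ spectralSet p s t u, p z.1 z.2 := by
  rw [spectralSet, sum_filter, ← Fintype.sum_prod_type']
  refine sum_congr rfl fun z _ => ?_
  rcases (hp0 z.1 z.2).lt_or_eq with hpos | hzero
  · simp [hpos]
  · simp [← hzero]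

theorem pos_of_mem_spectralSet (hz : z ∈ spectralSet p s t u) : 0 < p z.1 z.2 :=
  (mem_filter.1 hz).2.1

theorem margY2_le_of_mem_spectralSet (hz : z ∈ spectralSet p s t u) :
    margY2 p z.2 ≤ s * p z.1 z.2 := by
  obtain ⟨-, hpos, hs, -, -⟩ := mem_filter.1 hz
  rwa [condXY2, one_div_div, div_le_iff₀ hpos] at hs

theorem margX2_le_of_mem_spectralSet (hz : z ∈ spectralSet p s t u) :
    margX2 p z.1 ≤ t * p z.1 z.2 := by
  obtain ⟨-, hpos, -, ht, -⟩ := mem_filter.1 hz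
  rwa [condYX2, one_div_div, div_le_iff₀ hpos] at ht

theorem one_le_mul_of_mem_spectralSet (hz : z ∈ spectralSet p s t u) : 1 ≤ u * p z.1 z.2 := by
  obtain ⟨-, hpos, -, -, hu⟩ := mem_filter.1 hz
  rwa [div_le_iff₀ hpos] at hu

theorem one_le_of_mem_spectralSet (hp0 : ∀ x y, 0 ≤ p x y) (hz : z ∈ spectralSet p s t u) :
    1 ≤ s ∧ 1 ≤ t := by
  have hpos := pos_of_mem_spectralSet hz
  have hY : p z.1 z.2 ≤ margY2 p z.2 := single_le_sum (fun x _ => hp0 x z.2) (mem_univ z.1)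
  have hX : p z.1 z.2 ≤ margX2 p z.1 := single_le_sum (fun y _ => hp0 z.1 y) (mem_univ z.2)
  constructor
  · nlinarith [margY2_le_of_mem_spectralSet hz]
  · nlinarith [margX2_le_of_mem_spectralSet hz]

theorem card_filter_fst_spectralSet_le (hp0 : ∀ x y, 0 ≤ p x y) (ht : 0 ≤ t) (x : 𝒳) :
    (#{z ∈ spectralSet p s t u | z.1 = x} : ℝ) ≤ t :=
  card_le_of_le_mul_weight ht (fun _ hz => pos_of_mem_spectralSet (mem_filter.1 hz).1)
    (fun _ hz => (mem_filter.1 hz).2 ▸ margX2_le_of_mem_spectralSet (mem_filter.1 hz).1)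
    (sum_filter_fst_le_margX2 hp0 _ x)

theorem card_filter_snd_spectralSet_le (hp0 : ∀ x y, 0 ≤ p x y) (hs : 0 ≤ s) (y : 𝒴) :
    (#{z ∈ spectralSet p s t u | z.2 = y} : ℝ) ≤ s :=
  card_le_of_le_mul_weight hs (fun _ hz => pos_of_mem_spectralSet (mem_filter.1 hz).1)
    (fun _ hz => (mem_filter.1 hz).2 ▸ margY2_le_of_mem_spectralSet (mem_filter.1 hz).1)
    (sum_filter_snd_le_margY2 hp0 _ y)

theorem card_spectralSet_le (hp0 : ∀ x y, 0 ≤ p x y) (hp1 : ∑ x, ∑ y, p x y = 1) (hu : 0 ≤ u) :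
    (#(spectralSet p s t u) : ℝ) ≤ u :=
  card_le_of_le_mul_weight hu (fun _ hz => pos_of_mem_spectralSet hz)
    (fun _ hz => one_le_mul_of_mem_spectralSet hz)
    (sum_le_one hp0 hp1 _)

end SpectralSet

theorem le_one_fourth_of_natCast_eq_one_div_sqrt {δ : ℝ} (hδ0 : 0 < δ) (hδ1 : δ < 1) {j : ℕ}
    (hj : (j : ℝ) = 1 / √δ) : δ ≤ 1 / 4 := by
  have hsqrt0 : 0 < √δ := sqrt_pos.2 hδ0
  have hsqrt1 : √δ < 1 := (sqrt_lt_sqrt hδ0.le hδ1).trans_eq sqrt_one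
  have hj2 : (2 : ℝ) ≤ j := by
    have : (1 : ℝ) < j := by rw [hj, lt_div_iff₀ hsqrt0]; linarith
    exact_mod_cast (show 1 < j by exact_mod_cast this)
  have hsqrt : √δ ≤ 1 / 2 := by
    rw [eq_one_div_of_mul_eq_one_left (by rw [hj]; field_simp : √δ * j = 1)]
    gcongr
  nlinarith [sq_sqrt hδ0.le]

theorem logb_logb_div_nonneg {M δ : ℝ} (hM : 1 ≤ M) (hδ0 : 0 < δ) (hδ : δ ≤ 1 / 2) :
    0 ≤ logb 2 (logb 2 (M / δ)) := by
  have h2 : (2 : ℝ) ≤ M / δ := by rw [le_div_iff₀ hδ0]; linarith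
  apply logb_nonneg one_lt_two
  rw [le_logb_iff_rpow_le one_lt_two (by linarith), rpow_one]
  exact h2

theorem exists_two_pow_le_two_zpow_ceil {R δ : ℝ} (hδ0 : 0 < δ) (hδ1 : δ ≤ 1)
    (hR : 1 ≤ δ * 2 ^ R) :
    ∃ k : ℕ, ((2 ^ k : ℕ) : ℝ) ≤ 2 ^ ⌈R + 3 * logb 2 (1 / δ)⌉ ∧
      2 ^ R / δ ^ 3 ≤ ((2 ^ k : ℕ) : ℝ) := by
  set r := R + 3 * logb 2 (1 / δ)
  have hr : 0 ≤ r := by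
    have : 0 ≤ R := by
      by_contra! hneg
      nlinarith [rpow_lt_one_of_one_lt_of_neg one_lt_two hneg]
    have : 0 ≤ logb 2 (1 / δ) := logb_nonneg one_lt_two (by rw [le_div_iff₀ hδ0]; linarith)
    positivity
  have hcast : ((2 ^ ⌈r⌉.toNat : ℕ) : ℝ) = 2 ^ ⌈r⌉ := by
    rw [Nat.cast_pow, Nat.cast_ofNat, ← zpow_natCast, Int.toNat_of_nonneg (Int.ceil_nonneg hr)]
  have hpow : (2 : ℝ) ^ r = 2 ^ R / δ ^ 3 := by
    rw [rpow_add two_pos, mul_comm (3 : ℝ), rpow_mul zero_le_two, rpow_logb two_pos (by norm_num)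
      (by positivity)]
    norm_num [div_eq_mul_inv]
  refine ⟨⌈r⌉.toNat, hcast.le, ?_⟩
  rw [hcast, ← hpow, ← rpow_intCast]
  exact rpow_le_rpow_of_exponent_le one_le_two (Int.le_ceil r)

theorem binning_load_le {δ X Y Z m n : ℝ} (hδ0 : 0 < δ) (hδ1 : δ ≤ 1) (hX : 0 < X) (hY : 0 < Y)
    (hZ : Z ≤ X * Y) (hm : X / δ ^ 3 ≤ m) (hn : Y / δ ^ 3 ≤ n) :
    δ * Y / n + δ * X / m + δ ^ 4 * Z / (m * n) ≤ 3 * δ := by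
  have hm0 : 0 < m := lt_of_lt_of_le (by positivity) hm
  have hn0 : 0 < n := lt_of_lt_of_le (by positivity) hn
  have hδ4 : δ ^ 4 ≤ δ := pow_le_of_le_one hδ0.le hδ1 (by norm_num)
  have hδ10 : δ ^ 10 ≤ δ := pow_le_of_le_one hδ0.le hδ1 (by norm_num)
  have h₁ : δ * Y / n ≤ δ ^ 4 := by
    rw [div_le_iff₀ hn0]
    calc δ * Y = δ ^ 4 * (Y / δ ^ 3) := by field_simp
      _ ≤ δ ^ 4 * n := by gcongr
  have h₂ : δ * X / m ≤ δ ^ 4 := by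
    rw [div_le_iff₀ hm0]
    calc δ * X = δ ^ 4 * (X / δ ^ 3) := by field_simp
      _ ≤ δ ^ 4 * m := by gcongr
  have h₃ : δ ^ 4 * Z / (m * n) ≤ δ ^ 10 := by
    rw [div_le_iff₀ (by positivity)]
    calc δ ^ 4 * Z ≤ δ ^ 10 * (X / δ ^ 3 * (Y / δ ^ 3)) := by
          rw [show δ ^ 10 * (X / δ ^ 3 * (Y / δ ^ 3)) = δ ^ 4 * (X * Y) by field_simp]
          gcongr
      _ ≤ δ ^ 10 * (m * n) := by gcongr
  linarith

/-- Corollary 5.4, one-shot distributed source coding: under the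
stated spectral condition there is a deterministic Slepian–Wolf protocol, with no shared
randomness, with message sets of sizes `2^⌈R₁+3 log(1/δ)⌉` and `2^⌈R₂+3 log(1/δ)⌉`, and
decoding error at most `ε + 8δ`. -/
theorem one_shot_distributed_source_coding
    (p : 𝒳 → 𝒴 → ℝ) (hp0 : ∀ x y, 0 ≤ p x y) (hp1 : (∑ x, ∑ y, p x y) = 1)
    (ε δ : ℝ) (hε : ε ∈ Set.Ioo (0:ℝ) 1) (hδ : δ ∈ Set.Ioo (0:ℝ) 1)
    (hδint : ∃ j : ℕ, (j : ℝ) = 1 / Real.sqrt δ)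
    (R₁ R₂ : ℝ)
    (hPr : 1 - ε ≤ ∑ x, ∑ y,
      (if 1 / condXY2 p x y ≤ δ * (2 : ℝ) ^ R₁ ∧
          1 / condYX2 p y x ≤ δ * (2 : ℝ) ^ R₂ ∧
          1 / p x y ≤ δ ^ 4 * (2 : ℝ) ^ (R₁ + R₂ -
            logb 2 (logb 2 ((max (Fintype.card 𝒳) (Fintype.card 𝒴) : ℝ) / δ)))
        then p x y else 0)) :
    ∃ (cA cB : ℕ) (fA : 𝒳 → Fin cA) (fB : 𝒴 → Fin cB) (g : Fin cA → Fin cB → 𝒳 × 𝒴),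
      ((cA : ℝ) ≤ (2 : ℝ) ^ (⌈R₁ + 3 * logb 2 (1 / δ)⌉ : ℤ)) ∧
      ((cB : ℝ) ≤ (2 : ℝ) ^ (⌈R₂ + 3 * logb 2 (1 / δ)⌉ : ℤ)) ∧
      (∑ x, ∑ y, (if g (fA x) (fB y) ≠ (x, y) then p x y else 0)) ≤ ε + 8 * δ := by
  obtain ⟨hδ0, hδ1⟩ := hδ
  obtain ⟨j, hj⟩ := hδint
  set L := logb 2 (logb 2 ((max (Fintype.card 𝒳) (Fintype.card 𝒴) : ℝ) / δ))
  set S := spectralSet p (δ * 2 ^ R₁) (δ * 2 ^ R₂) (δ ^ 4 * 2 ^ (R₁ + R₂ - L))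
  rw [sum_ite_spectral_eq_sum_spectralSet hp0] at hPr
  obtain ⟨z₀, hz₀⟩ : S.Nonempty :=
    nonempty_of_sum_ne_zero (f := fun z => p z.1 z.2) (by linarith [hε.2])
  obtain ⟨hs, ht⟩ := one_le_of_mem_spectralSet hp0 hz₀
  have hL : 0 ≤ L := logb_logb_div_nonneg
    (by have : Nonempty 𝒳 := ⟨z₀.1⟩; exact_mod_cast le_max_of_le_left Fintype.card_pos) hδ0
    (by linarith [le_one_fourth_of_natCast_eq_one_div_sqrt hδ0 hδ1 hj])
  obtain ⟨kA, hcA, hmA⟩ := exists_two_pow_le_two_zpow_ceil hδ0 hδ1.le hs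
  obtain ⟨kB, hcB, hmB⟩ := exists_two_pow_le_two_zpow_ceil hδ0 hδ1.le ht
  obtain ⟨fA, fB, herr⟩ :=
    exists_binDecoder_error_le (G := S) (γ := Fin (2 ^ kA)) (η := Fin (2 ^ kB))
      (fun z => hp0 z.1 z.2) (card_filter_fst_spectralSet_le hp0 (by positivity))
      (card_filter_snd_spectralSet_le hp0 (by positivity))
      (card_spectralSet_le hp0 hp1 (by positivity)) z₀
  refine ⟨2 ^ kA, 2 ^ kB, fA, fB, binDecoder S z₀ fA fB, hcA, hcB, ?_⟩
  have hZ : (2 : ℝ) ^ (R₁ + R₂ - L) ≤ 2 ^ R₁ * 2 ^ R₂ := by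
    rw [← rpow_add two_pos]; exact rpow_le_rpow_of_exponent_le one_le_two (by linarith)
  have hload := binning_load_le hδ0 hδ1.le (by positivity) (by positivity) hZ hmA hmB
  simp only [Fintype.card_fin] at herr
  rw [← Fintype.sum_prod_type' fun x y =>
    if binDecoder S z₀ fA fB (fA x) (fB y) ≠ (x, y) then p x y else 0]
  calc _ ≤ _ := herr
    _ ≤ ε + 1 * (3 * δ) := add_le_add (sum_compl_le hp1 hPr)
        (mul_le_mul (sum_le_one hp0 hp1 S) hload (by positivity) zero_le_one)
    _ ≤ ε + 8 * δ := by linarith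

end
end

section
/- Let K be a positive integer, δ ∈ (0,1), and let (W,V,E,F) be jointly distributed over [K]⁴ such that, conditioned on (W,V)=(w,v), the pair (E,F) is uniformly distributed on {1,…,w}×{1,…,v}. Suppose the support of (W,V) is contained in the square T := {a⁰, a⁰+1, …, a¹}×{b⁰, b⁰+1, …, b¹}, where 1 ≤ a⁰ ≤ a¹ ≤ K and 1 ≤ b⁰ ≤ b¹ ≤ K. Define Bad := { (e,f) ∈ [K]×[K] : (e,f) ∉ T and Pr_{(w,v)~WV}[ w ≥ e and v ≥ f ] ≤ δ }. Then Pr[(E,F) ∈ Bad] ≤ 2δ. -/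
open Finset Real
open scoped Classical

noncomputable section

/-- Marginal on `(W, V)` of a joint distribution on `Fin K × Fin K × Fin K × Fin K`
(coordinates ordered as `(w, v, e, f)`). -/
def margWV {K : ℕ} (p : Fin K → Fin K → Fin K → Fin K → ℝ) (w v : Fin K) : ℝ :=
  ∑ e, ∑ f, p w v e f

/-!
Every outcome of positive mass has `E ≤ W` and `F ≤ V` with `(W, V) ∈ T`. A point `(e, f) ∉ T` lying
below a point of the rectangle `T` lies strictly to the left of `T` or strictly below it; in the first
case every support point has `w ≥ e`, so `Pr[W ≥ e, V ≥ f] = Pr[V ≥ f]`. Hence `Bad` is covered by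
the events `Pr[V ≥ F] ≤ δ` and `Pr[W ≥ E] ≤ δ`. The first one is contained in `{F ≥ f₀} ⊆ {V ≥ f₀}`
for its least value `f₀`, which has probability `Pr[V ≥ f₀] ≤ δ`; symmetrically for the second.
-/

theorem Set.OrdConnected.lt_of_le_of_notMem {α : Type*} [LinearOrder α] {I : Set α}
    [I.OrdConnected] {e w w' : α} (he : e ∉ I) (hw : w ∈ I) (hew : e ≤ w) (hw' : w' ∈ I) :
    e < w' := by
  by_contra! h
  exact he (Set.Icc_subset I hw' hw ⟨h, hew⟩)

section FiniteWeight

variable {Ω α β : Type*} [Fintype Ω] [LinearOrder α] [LinearOrder β]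

def mass (μ : Ω → ℝ) (P : Ω → Prop) : ℝ := ∑ ω, if P ω then μ ω else 0

variable {μ : Ω → ℝ} {P Q R : Ω → Prop}

theorem mass_le_mass_of_imp (hμ : ∀ ω, 0 ≤ μ ω) (h : ∀ ω, μ ω ≠ 0 → P ω → Q ω) :
    mass μ P ≤ mass μ Q := by
  refine sum_le_sum fun ω _ => ?_
  by_cases hω : μ ω = 0
  · simp [hω]
  · have := hμ ω
    have := h ω hω
    split_ifs <;> simp_all

theorem mass_le_add_of_imp_or (hμ : ∀ ω, 0 ≤ μ ω) (h : ∀ ω, μ ω ≠ 0 → P ω → Q ω ∨ R ω) :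
    mass μ P ≤ mass μ Q + mass μ R := by
  rw [mass, mass, mass, ← sum_add_distrib]
  refine sum_le_sum fun ω _ => ?_
  by_cases hω : μ ω = 0
  · simp [hω]
  · have := hμ ω
    have := h ω hω
    split_ifs <;> simp_all

theorem mass_tail_le {X Y : Ω → α} {δ : ℝ}
    (hμ : ∀ ω, 0 ≤ μ ω) (hYX : ∀ ω, μ ω ≠ 0 → Y ω ≤ X ω) (hδ : 0 ≤ δ) :
    mass μ (fun ω => mass μ (fun ω' => Y ω ≤ X ω') ≤ δ) ≤ δ := by
  set S := univ.filter fun ω => mass μ (fun ω' => Y ω ≤ X ω') ≤ δ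
  rcases S.eq_empty_or_nonempty with hS | hS
  · have : mass μ (fun ω => mass μ (fun ω' => Y ω ≤ X ω') ≤ δ) = 0 :=
      sum_eq_zero fun ω _ => if_neg fun h =>
        notMem_empty ω (hS ▸ (mem_filter.2 ⟨mem_univ ω, h⟩ : ω ∈ S))
    exact this ▸ hδ
  obtain ⟨ω₀, hω₀, hmin⟩ := S.exists_min_image Y hS
  calc mass μ (fun ω => mass μ (fun ω' => Y ω ≤ X ω') ≤ δ)
      ≤ mass μ (fun ω => Y ω₀ ≤ X ω) := mass_le_mass_of_imp hμ fun ω hω h =>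
        (hmin ω (mem_filter.2 ⟨mem_univ ω, h⟩)).trans (hYX ω hω)
    _ ≤ δ := (mem_filter.1 hω₀).2

theorem mass_outside_rectangle_le_two_mul {W E : Ω → α} {V F : Ω → β} {I : Set α} {J : Set β}
    [I.OrdConnected] [J.OrdConnected] {δ : ℝ} (hμ : ∀ ω, 0 ≤ μ ω) (hδ : 0 ≤ δ)
    (hsupp : ∀ ω, μ ω ≠ 0 → E ω ≤ W ω ∧ F ω ≤ V ω ∧ W ω ∈ I ∧ V ω ∈ J) :
    mass μ (fun ω => ¬(E ω ∈ I ∧ F ω ∈ J) ∧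
      mass μ (fun ω' => E ω ≤ W ω' ∧ F ω ≤ V ω') ≤ δ) ≤ 2 * δ := by
  have hcases : ∀ ω, μ ω ≠ 0 → ¬(E ω ∈ I ∧ F ω ∈ J) ∧
      mass μ (fun ω' => E ω ≤ W ω' ∧ F ω ≤ V ω') ≤ δ →
      mass μ (fun ω' => F ω ≤ V ω') ≤ δ ∨ mass μ (fun ω' => E ω ≤ W ω') ≤ δ := by
    rintro ω hω ⟨hT, hjoint⟩
    obtain ⟨hEW, hFV, hWI, hVJ⟩ := hsupp ω hω
    by_cases hE : E ω ∈ I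
    · have hF : F ω ∉ J := fun hF => hT ⟨hE, hF⟩
      refine .inr (le_trans (mass_le_mass_of_imp hμ fun ω' hω' hE' => ⟨hE', ?_⟩) hjoint)
      exact (Set.OrdConnected.lt_of_le_of_notMem hF hVJ hFV (hsupp ω' hω').2.2.2).le
    · refine .inl (le_trans (mass_le_mass_of_imp hμ fun ω' hω' hF' => ⟨?_, hF'⟩) hjoint)
      exact (Set.OrdConnected.lt_of_le_of_notMem hE hWI hEW (hsupp ω' hω').2.2.1).le
  calc _ ≤ mass μ (fun ω => mass μ (fun ω' => F ω ≤ V ω') ≤ δ) +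
        mass μ (fun ω => mass μ (fun ω' => E ω ≤ W ω') ≤ δ) := mass_le_add_of_imp_or hμ hcases
    _ ≤ δ + δ := add_le_add (mass_tail_le hμ (fun ω hω => (hsupp ω hω).2.1) hδ)
        (mass_tail_le hμ (fun ω hω => (hsupp ω hω).1) hδ)
    _ = 2 * δ := by ring

end FiniteWeight

section JointWeight

variable {K : ℕ} (p : Fin K → Fin K → Fin K → Fin K → ℝ)

def jointWeight (ω : (Fin K × Fin K) × (Fin K × Fin K)) : ℝ := p ω.2.1 ω.2.2 ω.1.1 ω.1.2

theorem sum_ite_margWV_eq_mass (C : Fin K → Fin K → Prop) [∀ w v, Decidable (C w v)] :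
    ∑ w, ∑ v, (if C w v then margWV p w v else 0) =
      mass (jointWeight p) (fun ω => C ω.2.1 ω.2.2) := by
  rw [mass, Fintype.sum_prod_type_right]
  simp only [jointWeight, margWV, Fintype.sum_prod_type, sum_ite_irrel, sum_const_zero]

theorem sum_ite_sum_eq_mass (B : Fin K → Fin K → Prop) [∀ e f, Decidable (B e f)] :
    ∑ e, ∑ f, (if B e f then ∑ w, ∑ v, p w v e f else 0) =
      mass (jointWeight p) (fun ω => B ω.1.1 ω.1.2) := by
  simp only [mass, jointWeight, Fintype.sum_prod_type, sum_ite_irrel, sum_const_zero]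

variable {p}

theorem margWV_pos_of_ne_zero (hp0 : ∀ w v e f, 0 ≤ p w v e f) {w v e f : Fin K}
    (h : p w v e f ≠ 0) : 0 < margWV p w v :=
  calc 0 < p w v e f := (hp0 w v e f).lt_of_ne' h
    _ ≤ ∑ f', p w v e f' := single_le_sum (fun f' _ => hp0 w v e f') (mem_univ f)
    _ ≤ margWV p w v :=
      single_le_sum (fun e' _ => sum_nonneg fun f' _ => hp0 w v e' f') (mem_univ e)

end JointWeight

theorem bad_set_probability_bound_general
    {K : ℕ} (δ : ℝ) (hδ0 : 0 < δ)
    (p : Fin K → Fin K → Fin K → Fin K → ℝ)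
    (hp0 : ∀ w v e f, 0 ≤ p w v e f)
    (hcond : ∀ w v e f, p w v e f = margWV p w v *
      (if e ≤ w ∧ f ≤ v then 1 / (((w : ℕ) : ℝ) + 1) / (((v : ℕ) : ℝ) + 1) else 0))
    (a₀ a₁ b₀ b₁ : ℕ)
    (hsupp : ∀ w v : Fin K, 0 < margWV p w v →
      (a₀ ≤ (w : ℕ) + 1 ∧ (w : ℕ) + 1 ≤ a₁ ∧ b₀ ≤ (v : ℕ) + 1 ∧ (v : ℕ) + 1 ≤ b₁)) :
    (∑ e : Fin K, ∑ f : Fin K,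
      (if ¬(a₀ ≤ (e : ℕ) + 1 ∧ (e : ℕ) + 1 ≤ a₁ ∧ b₀ ≤ (f : ℕ) + 1 ∧ (f : ℕ) + 1 ≤ b₁) ∧
          (∑ w, ∑ v, (if e ≤ w ∧ f ≤ v then margWV p w v else 0)) ≤ δ
        then ∑ w, ∑ v, p w v e f else 0)) ≤ 2 * δ := by
  have hsucc : Monotone fun x : Fin K => (x : ℕ) + 1 := fun _ _ h => Nat.succ_le_succ h
  have := Set.ordConnected_Icc.preimage_mono (s := Set.Icc a₀ a₁) hsucc
  have := Set.ordConnected_Icc.preimage_mono (s := Set.Icc b₀ b₁) hsucc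
  have key := mass_outside_rectangle_le_two_mul (μ := jointWeight p)
    (E := fun ω => ω.1.1) (F := fun ω => ω.1.2) (W := fun ω => ω.2.1) (V := fun ω => ω.2.2)
    (I := (fun x : Fin K => (x : ℕ) + 1) ⁻¹' Set.Icc a₀ a₁)
    (J := (fun x : Fin K => (x : ℕ) + 1) ⁻¹' Set.Icc b₀ b₁) (fun _ => hp0 _ _ _ _) hδ0.le
    fun ω hω => by
      have hle : ω.1.1 ≤ ω.2.1 ∧ ω.1.2 ≤ ω.2.2 :=
        by_contra fun hle => hω (by rw [jointWeight, hcond, if_neg hle, mul_zero])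
      obtain ⟨hw₀, hw₁, hv₀, hv₁⟩ := hsupp _ _ (margWV_pos_of_ne_zero hp0 hω)
      exact ⟨hle.1, hle.2, ⟨hw₀, hw₁⟩, ⟨hv₀, hv₁⟩⟩
  simp only [sum_ite_margWV_eq_mass, sum_ite_sum_eq_mass]
  convert key using 4
  exact (not_congr and_assoc).symm

/-- Claim 3.10: let `(W,V,E,F)` be jointly distributed over `[K]⁴`
(modelled as `Fin K`, a value `w : Fin K` representing the integer `w+1`), with `(E,F)`
uniform on `{1,…,w}×{1,…,v}` conditioned on `(W,V)=(w,v)`, and suppose the support of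
`(W,V)` is contained in the square `T = {a⁰,…,a¹}×{b⁰,…,b¹}`.  With
`Bad = { (e,f) ∉ T : Pr_{(w,v)∼WV}[w ≥ e ∧ v ≥ f] ≤ δ }`, one has
`Pr[(E,F) ∈ Bad] ≤ 2δ`. -/
theorem bad_set_probability_bound
    {K : ℕ} (hK : 0 < K) (δ : ℝ) (hδ0 : 0 < δ) (hδ1 : δ < 1)
    (p : Fin K → Fin K → Fin K → Fin K → ℝ)
    (hp0 : ∀ w v e f, 0 ≤ p w v e f)
    (hp1 : (∑ w, ∑ v, ∑ e, ∑ f, p w v e f) = 1)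
    (hcond : ∀ w v e f, p w v e f = margWV p w v *
      (if e ≤ w ∧ f ≤ v then 1 / (((w : ℕ) : ℝ) + 1) / (((v : ℕ) : ℝ) + 1) else 0))
    (a₀ a₁ b₀ b₁ : ℕ)
    (ha : 1 ≤ a₀) (ha' : a₀ ≤ a₁) (ha'' : a₁ ≤ K)
    (hb : 1 ≤ b₀) (hb' : b₀ ≤ b₁) (hb'' : b₁ ≤ K)
    (hsupp : ∀ w v : Fin K, 0 < margWV p w v →
      (a₀ ≤ (w : ℕ) + 1 ∧ (w : ℕ) + 1 ≤ a₁ ∧ b₀ ≤ (v : ℕ) + 1 ∧ (v : ℕ) + 1 ≤ b₁)) :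
    (∑ e : Fin K, ∑ f : Fin K,
      (if ¬(a₀ ≤ (e : ℕ) + 1 ∧ (e : ℕ) + 1 ≤ a₁ ∧ b₀ ≤ (f : ℕ) + 1 ∧ (f : ℕ) + 1 ≤ b₁) ∧
          (∑ w, ∑ v, (if e ≤ w ∧ f ≤ v then margWV p w v else 0)) ≤ δ
        then ∑ w, ∑ v, p w v e f else 0)) ≤ 2 * δ :=
  bad_set_probability_bound_general δ hδ0 p hp0 hcond a₀ a₁ b₀ b₁ hsupp
end
end
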